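/- arXiv:1710.11070 — 5 statements merged into one kernel-verified Lean document; each statement's English description precedes it below -/
import Mathlib

section
/- (Lemma 1: first-order identifiability under linear independence.) Let m = 3. If θ ∈ Θ_{c_0} is such that the topic vectors θ_1,…,θ_K are linearly independent in ℝ^V, then 𝔡_{3,1}(θ) > 0 (equivalently, 𝔭(3;θ) = 1). -/
open MeasureTheory Filter

noncomputable section

namespace TopicModel

/-- The probability simplex in `ℝ^K`. -/
def simplex (K : ℕ) : Set (Fin K → ℝ) := {h | (∀ k, 0 ≤ h k) ∧ ∑ k, h k = 1}

/-- The parameter set `Θ_{c₀}`: `K` topic vectors, each a probability vector on `[V]`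
with all entries at least `c₀`. -/
def Theta (c0 : ℝ) (V K : ℕ) : Set (Fin K → Fin V → ℝ) :=
  {θ | (∀ k ℓ, c0 ≤ θ k ℓ) ∧ ∀ k, ∑ ℓ, θ k ℓ = 1}

/-- `θ` is a tuple of probability vectors. -/
def IsParam {V K : ℕ} (θ : Fin K → Fin V → ℝ) : Prop :=
  (∀ k ℓ, 0 ≤ θ k ℓ) ∧ ∀ k, ∑ ℓ, θ k ℓ = 1

/-- Word probability `p_{θ,h}(v) = Σ_k h_k θ_k(v)`. -/
def pWord {V K : ℕ} (θ : Fin K → Fin V → ℝ) (h : Fin K → ℝ) (v : Fin V) : ℝ :=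
  ∑ k, h k * θ k v

/-- Document probability given mixing vector `h`: `p_{θ,h}(x) = Π_i p_{θ,h}(x_i)`. -/
def pDoc {V K : ℕ} (m : ℕ) (θ : Fin K → Fin V → ℝ) (h : Fin K → ℝ)
    (x : Fin m → Fin V) : ℝ :=
  ∏ i, pWord θ h (x i)

/-- Marginal document probability `p_{θ,m}(x) = ∫ p_{θ,h}(x) dν₀(h)`. -/
def pM {V K : ℕ} (ν0 : Measure (Fin K → ℝ)) (m : ℕ) (θ : Fin K → Fin V → ℝ)
    (x : Fin m → Fin V) : ℝ :=
  ∫ h, pDoc m θ h x ∂ν0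

/-- `ℓ¹`-norm of a `K × V` array: `‖δ‖₁ = Σ_k Σ_ℓ |δ_k(ℓ)|`. -/
def norm1 {V K : ℕ} (δ : Fin K → Fin V → ℝ) : ℝ := ∑ k, ∑ ℓ, |δ k ℓ|

/-- Wasserstein distance between parameters:
`d_W(θ,θ') = min_π Σ_k ‖θ_k − θ'_{π(k)}‖₁`. -/
def dW {V K : ℕ} (θ θ' : Fin K → Fin V → ℝ) : ℝ :=
  ⨅ π : Equiv.Perm (Fin K), ∑ k, ∑ ℓ, |θ k ℓ - θ' (π k) ℓ|

/-- `L¹` distance between the document pmfs of two parameters. -/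
def distL1 {V K : ℕ} (ν0 : Measure (Fin K → ℝ)) (m : ℕ)
    (θ θ' : Fin K → Fin V → ℝ) : ℝ :=
  ∑ x : Fin m → Fin V, |pM ν0 m θ x - pM ν0 m θ' x|

/-- The `p`-th order degeneracy criterion `𝔡_{m,p}(θ)`: the infimum over all
`δ` with `‖δ‖₁ = 1` and `Σ_ℓ δ_k(ℓ) = 0` for every `k`, of
`Σ_{x ∈ [V]^m} |∫ p_{θ,h}(x) Σ_{i₁<⋯<i_p} Π_t (δ_h(x_{i_t}) / p_{θ,h}(x_{i_t})) dν₀|`. -/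
def degen {V K : ℕ} (ν0 : Measure (Fin K → ℝ)) (m : ℕ) (θ : Fin K → Fin V → ℝ)
    (p : ℕ) : ℝ :=
  sInf {r : ℝ | ∃ δ : Fin K → Fin V → ℝ, norm1 δ = 1 ∧ (∀ k, ∑ ℓ, δ k ℓ = 0) ∧
    r = ∑ x : Fin m → Fin V,
      |∫ h, pDoc m θ h x *
        ∑ S ∈ Finset.powersetCard p (Finset.univ : Finset (Fin m)),
          ∏ i ∈ S, ((∑ k, h k * δ k (x i)) / pWord θ h (x i)) ∂ν0|}

/-- The order of degeneracy `𝔭(m;θ) ∈ ℕ ∪ {∞}`: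
the least `p ∈ {1,…,m}` with `𝔡_{m,p}(θ) > 0`, or `∞` if none exists. -/
def pOrder {V K : ℕ} (ν0 : Measure (Fin K → ℝ)) (m : ℕ) (θ : Fin K → Fin V → ℝ) : ℕ∞ :=
  sInf ((↑) '' {p : ℕ | 1 ≤ p ∧ p ≤ m ∧ 0 < degen ν0 m θ p})

/-- Assumption (A2) on the mixing measure `ν₀`: a Borel probability measure supported on the
simplex, exchangeable, with `E[h₁²] > E[h₁h₂]` and (when `K ≥ 3`)
`E[h₁³] + 2E[h₁h₂h₃] > 3E[h₁²h₂]`. -/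
structure NiceMixing (K : ℕ) (ν0 : Measure (Fin K → ℝ)) : Prop where
  prob : IsProbabilityMeasure ν0
  support : ν0 (simplex K)ᶜ = 0
  exch : ∀ π : Equiv.Perm (Fin K), Measure.map (fun h => h ∘ π) ν0 = ν0
  mom2 : ∀ i j : Fin K, i ≠ j → ∫ h, h i * h j ∂ν0 < ∫ h, h i ^ 2 ∂ν0
  mom3 : ∀ i j k : Fin K, i ≠ j → j ≠ k → i ≠ k →
    3 * ∫ h, h i ^ 2 * h j ∂ν0 < ∫ h, h i ^ 3 ∂ν0 + 2 * ∫ h, h i * h j * h k ∂ν0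

/-- The equivalence class `Θ̃_{c₀}(θ)` of parameters inducing the same document pmf as `θ`. -/
def equivClass {V K : ℕ} (ν0 : Measure (Fin K → ℝ)) (m : ℕ) (c0 : ℝ)
    (θ : Fin K → Fin V → ℝ) : Set (Fin K → Fin V → ℝ) :=
  {θ' | θ' ∈ Theta c0 V K ∧ ∀ x : Fin m → Fin V, pM ν0 m θ' x = pM ν0 m θ x}

/-- Probability of the event `A` under `n` i.i.d. draws from the pmf `p` on a finite set. -/
def prodProb {α : Type*} [Fintype α] (p : α → ℝ) (n : ℕ) (A : Set (Fin n → α)) : ℝ :=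
  ∑ xs : Fin n → α, A.indicator (fun ys => ∏ i, p (ys i)) xs

end TopicModel

/-!
Since `p_{θ,h}(x)` cancels the denominators, the integrand of `𝔡_{3,1}` is the derivative in `θ`,
in the direction `δ`, of `p_{θ,h} ⊗ p_{θ,h} ⊗ p_{θ,h}`; integrating against `ν₀` gives a tensor
`T δ`, linear in `δ`, whose coefficients are the third moments of `ν₀`. So `𝔡_{3,1}(θ)` is the
minimum of `‖T δ‖₁` over a compact set of `δ ≠ 0`, and it suffices that `T δ = 0` forces `δ = 0`.

Contract `T δ` against a biorthogonal family `w_p` of the linearly independent `θ_k`, the all-ones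
vector and the coordinate vectors `e_v`; by exchangeability the moments of `ν₀` depend only on the
pattern of equal indices. The contraction `(e_v, 1, 1)` gives `∑_k δ_k = 0`; `(e_v, w_p, 1)`,
with `E[h_k h_l] = b + (a - b) [k = l]` and `a > b`, gives `δ_p = -∑_k ⟨w_p, δ_k⟩ θ_k`, so the
matrix `⟨w_p, δ_k⟩` is antisymmetric with zero column sums; `(w_p, w_p, w_s)` then shows that its
off-diagonal entries, multiplied by `E[h₁³] + 2E[h₁h₂h₃] - 3E[h₁²h₂] > 0`, vanish.
-/

open Finset

lemma IsCompact.lt_sInf_image {X : Type*} [TopologicalSpace X] {s : Set X} {f : X → ℝ} {a : ℝ}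
    (hs : IsCompact s) (hne : s.Nonempty) (hf : ContinuousOn f s) (hpos : ∀ x ∈ s, a < f x) :
    a < sInf (f '' s) := by
  obtain ⟨x, hx, hfx⟩ := (hs.image_of_continuousOn hf).sInf_mem (hne.image f)
  exact hfx ▸ hpos x hx

namespace TopicModel

lemma sum_mul_sum_mul_sum {ι R : Type*} [Fintype ι] [NonUnitalNonAssocSemiring R]
    (a b c : ι → R) :
    (∑ k, a k) * (∑ l, b l) * (∑ j, c j) = ∑ k, ∑ l, ∑ j, a k * b l * c j := by
  simp only [sum_mul, mul_sum]
  rw [sum_comm_cycle]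
  exact sum_congr rfl fun _ _ => sum_comm

lemma sum_sum_ite_mul {ι R : Type*} [Fintype ι] [DecidableEq ι] [CommRing R] (a b : R)
    (X : ι → ι → R) :
    ∑ k, ∑ l, (if k = l then a else b) * X k l =
      b * ∑ k, ∑ l, X k l + (a - b) * ∑ k, X k k := by
  have h : ∀ k l, (if k = l then a else b) * X k l =
      b * X k l + if k = l then (a - b) * X k l else 0 := by
    intro k l
    split_ifs <;> ring
  simp [h, sum_add_distrib, mul_sum]

lemma injective_triple_of_ne {α : Type*} {a b c : α} (hab : a ≠ b) (hbc : b ≠ c) (hac : a ≠ c) :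
    Function.Injective ![a, b, c] := by
  intro x y hxy
  fin_cases x <;> fin_cases y <;> simp_all [eq_comm]

theorem exists_dotProduct_eq_ite_of_linearIndependent {𝕜 ι n : Type*} [Field 𝕜] [Fintype ι]
    [DecidableEq ι] [Fintype n] [DecidableEq n] {θ : ι → n → 𝕜} (hli : LinearIndependent 𝕜 θ) :
    ∃ w : ι → n → 𝕜, ∀ p k, w p ⬝ᵥ θ k = if p = k then 1 else 0 := by
  obtain ⟨g, hg⟩ := (Fintype.linearCombination 𝕜 θ).exists_leftInverse_of_injective
    (LinearMap.ker_eq_bot.2 (linearIndependent_iff_injective_fintypeLinearCombination.1 hli))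
  refine ⟨LinearMap.toMatrix' g, fun p k => ?_⟩
  have hgθ : g (θ k) = Pi.single k 1 := by
    have : Fintype.linearCombination 𝕜 θ (Pi.single k 1) = θ k := by simp
    rw [← this, ← LinearMap.comp_apply, hg, LinearMap.id_apply]
  change (Matrix.mulVec (LinearMap.toMatrix' g) (θ k)) p = _
  rw [LinearMap.toMatrix'_mulVec, hgθ, Pi.single_apply]

section Norm1

variable {V K : ℕ}

lemma abs_le_norm1 (δ : Fin K → Fin V → ℝ) (k : Fin K) (ℓ : Fin V) : |δ k ℓ| ≤ norm1 δ :=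
  (single_le_sum (f := fun ℓ => |δ k ℓ|) (fun _ _ => abs_nonneg _) (mem_univ ℓ)).trans
    (single_le_sum (f := fun k => ∑ ℓ, |δ k ℓ|) (fun _ _ => sum_nonneg fun _ _ => abs_nonneg _)
      (mem_univ k))

lemma norm1_smul (c : ℝ) (δ : Fin K → Fin V → ℝ) : norm1 (c • δ) = |c| * norm1 δ := by
  simp [norm1, abs_mul, mul_sum]

lemma continuous_norm1 : Continuous (norm1 : (Fin K → Fin V → ℝ) → ℝ) := by
  unfold norm1
  fun_prop

lemma isCompact_setOf_norm1_eq_one : IsCompact {δ : Fin K → Fin V → ℝ | norm1 δ = 1} :=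
  (isCompact_univ_pi fun _ => isCompact_univ_pi fun _ => isCompact_Icc).of_isClosed_subset
    (isClosed_eq continuous_norm1 continuous_const)
    fun δ hδ k _ ℓ _ => abs_le.1 (hδ ▸ abs_le_norm1 δ k ℓ)

lemma isCompact_setOf_norm1_eq_one_and_sum_eq_zero :
    IsCompact {δ : Fin K → Fin V → ℝ | norm1 δ = 1 ∧ ∀ k, ∑ ℓ, δ k ℓ = 0} := by
  rw [Set.ofPred_and, Set.ofPred_forall]
  exact isCompact_setOf_norm1_eq_one.inter_right
    (isClosed_iInter fun k => isClosed_eq (by fun_prop) continuous_const)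

lemma exists_norm1_eq_one_and_sum_eq_zero (hK : 0 < K) (hV : 2 ≤ V) :
    ∃ δ : Fin K → Fin V → ℝ, norm1 δ = 1 ∧ ∀ k, ∑ ℓ, δ k ℓ = 0 := by
  let v₀ : Fin V := ⟨0, by omega⟩
  let v₁ : Fin V := ⟨1, by omega⟩
  let δ : Fin K → Fin V → ℝ := fun _ => Pi.single v₀ 1 - Pi.single v₁ 1
  have hpos : 0 < norm1 δ := by
    refine one_pos.trans_le ((le_of_eq ?_).trans (abs_le_norm1 δ ⟨0, hK⟩ v₀))
    simp [δ, v₀, v₁, Fin.ext_iff]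
  refine ⟨(norm1 δ)⁻¹ • δ, ?_, fun k => ?_⟩
  · rw [norm1_smul, abs_of_pos (inv_pos.2 hpos), inv_mul_cancel₀ hpos.ne']
  · simp [δ, ← mul_sum, sum_sub_distrib]

end Norm1

section FirstOrderTensor

variable {V K : ℕ} (M : Fin K → Fin K → Fin K → ℝ)

def momentTensor (α β γ : Fin K → Fin V → ℝ) (v₁ v₂ v₃ : Fin V) : ℝ :=
  ∑ k, ∑ l, ∑ j, M k l j * (α k v₁ * β l v₂ * γ j v₃)

def firstOrderTensor (θ δ : Fin K → Fin V → ℝ) : Fin V → Fin V → Fin V → ℝ :=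
  momentTensor M δ θ θ + momentTensor M θ δ θ + momentTensor M θ θ δ

lemma sum_mul_momentTensor (f g e : Fin V → ℝ) (α β γ : Fin K → Fin V → ℝ) :
    ∑ v₁, ∑ v₂, ∑ v₃, f v₁ * g v₂ * e v₃ * momentTensor M α β γ v₁ v₂ v₃ =
      ∑ k, ∑ l, ∑ j, M k l j * ((f ⬝ᵥ α k) * (g ⬝ᵥ β l) * (e ⬝ᵥ γ j)) := by
  simp only [momentTensor, mul_sum]
  simp_rw [sum_comm (s := (univ : Finset (Fin V))) (t := (univ : Finset (Fin K)))]
  refine sum_congr rfl fun k _ => sum_congr rfl fun l _ => sum_congr rfl fun j _ => ?_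
  simp only [dotProduct]
  rw [sum_mul_sum_mul_sum]
  simp only [mul_sum]
  exact sum_congr rfl fun _ _ => sum_congr rfl fun _ _ => sum_congr rfl fun _ _ => by ring

lemma continuous_firstOrderTensor (θ : Fin K → Fin V → ℝ) (v₁ v₂ v₃ : Fin V) :
    Continuous fun δ => firstOrderTensor M θ δ v₁ v₂ v₃ := by
  simp only [firstOrderTensor, momentTensor, Pi.add_apply]
  fun_prop

variable {M} {θ δ w : Fin K → Fin V → ℝ}

lemma contract_firstOrderTensor_eq_zero (hT : firstOrderTensor M θ δ = 0) (f g e : Fin V → ℝ) :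
    ∑ k, ∑ l, ∑ j, M k l j * ((f ⬝ᵥ δ k) * (g ⬝ᵥ θ l) * (e ⬝ᵥ θ j)) +
      ∑ k, ∑ l, ∑ j, M k l j * ((f ⬝ᵥ θ k) * (g ⬝ᵥ δ l) * (e ⬝ᵥ θ j)) +
      ∑ k, ∑ l, ∑ j, M k l j * ((f ⬝ᵥ θ k) * (g ⬝ᵥ θ l) * (e ⬝ᵥ δ j)) = 0 := by
  have h := congrArg (fun T => ∑ v₁, ∑ v₂, ∑ v₃, f v₁ * g v₂ * e v₃ * T v₁ v₂ v₃) hT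
  simpa only [firstOrderTensor, Pi.add_apply, mul_add, sum_add_distrib, sum_mul_momentTensor,
    Pi.zero_apply, mul_zero, sum_const_zero] using h

lemma sum_eq_zero_of_firstOrderTensor_eq_zero {m : ℝ} (hθ : ∀ k, ∑ v, θ k v = 1)
    (hδ : ∀ k, ∑ v, δ k v = 0) (hM : ∀ k, ∑ l, ∑ j, M k l j = m) (hm : m ≠ 0)
    (hT : firstOrderTensor M θ δ = 0) : ∑ k, δ k = 0 := by
  ext v
  have h := contract_firstOrderTensor_eq_zero hT (Pi.single v 1) 1 1
  simp only [single_dotProduct, one_dotProduct, hθ, hδ, one_mul, mul_one, mul_zero,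
    sum_const_zero, add_zero] at h
  simp_rw [← sum_mul, hM, ← mul_sum] at h
  simpa [hm] using h

lemma eq_neg_sum_smul_of_firstOrderTensor_eq_zero {a b : ℝ}
    (hw : ∀ p k, w p ⬝ᵥ θ k = if p = k then 1 else 0) (hθ : ∀ k, ∑ v, θ k v = 1)
    (hδ : ∀ k, ∑ v, δ k v = 0) (hM : ∀ k l, ∑ j, M k l j = if k = l then a else b) (hab : a ≠ b)
    (hΔ : ∑ k, δ k = 0) (hT : firstOrderTensor M θ δ = 0) (p : Fin K) :
    δ p = -∑ k, (w p ⬝ᵥ δ k) • θ k := by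
  ext v
  have h := contract_firstOrderTensor_eq_zero hT (Pi.single v 1) (w p) 1
  simp only [single_dotProduct, one_dotProduct, hθ, hδ, hw, one_mul, mul_one, mul_zero,
    sum_const_zero, add_zero] at h
  simp_rw [← sum_mul, hM, sum_sum_ite_mul] at h
  have hΔv : ∑ k, δ k v = 0 := by simpa using congrFun hΔ v
  simp only [mul_ite, mul_one, mul_zero, sum_ite_eq, mem_univ, if_true, ← mul_sum, hΔv,
    ← dotProduct_sum, hΔ, dotProduct_zero, sum_const_zero, zero_add] at h
  rw [← mul_add, mul_eq_zero, sub_eq_zero, or_iff_right hab] at h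
  simp only [Pi.neg_apply, Finset.sum_apply, Pi.smul_apply, smul_eq_mul, mul_comm (w p ⬝ᵥ _)]
  linear_combination h

lemma dotProduct_eq_neg_dotProduct (hw : ∀ p k, w p ⬝ᵥ θ k = if p = k then 1 else 0)
    (hδ : ∀ p, δ p = -∑ k, (w p ⬝ᵥ δ k) • θ k) (p q : Fin K) :
    w q ⬝ᵥ δ p = -(w p ⬝ᵥ δ q) := by
  rw [hδ p]
  simp [dotProduct_sum, hw]

lemma dotProduct_eq_zero_of_firstOrderTensor_eq_zero {a b c : ℝ}
    (hw : ∀ p k, w p ⬝ᵥ θ k = if p = k then 1 else 0)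
    (hM : ∀ k l j, M k l j =
      if k = l ∧ l = j then a else if k = l ∨ l = j ∨ k = j then b else c)
    (habc : 3 * b < a + 2 * c) (hanti : ∀ p q, w q ⬝ᵥ δ p = -(w p ⬝ᵥ δ q))
    (hcol : ∀ p, ∑ k, w p ⬝ᵥ δ k = 0) (hT : firstOrderTensor M θ δ = 0) (p s : Fin K) :
    w p ⬝ᵥ δ s = 0 := by
  have hdiag : ∀ p, w p ⬝ᵥ δ p = 0 := fun p => by linarith [hanti p p]
  rcases eq_or_ne p s with rfl | hps
  · exact hdiag p
  have h := contract_firstOrderTensor_eq_zero hT (w p) (w p) (w s)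
  simp only [hw, mul_ite, ite_mul, mul_one, mul_zero, zero_mul, sum_ite_irrel,
    sum_const_zero, sum_ite_eq, mem_univ, if_true] at h
  have hMkps : ∀ k, M k p s =
      c + (b - c) * ((if k = p then 1 else 0) + if k = s then 1 else 0) := by
    intro k
    rw [hM]
    grind
  have hMpks : ∀ k, M p k s =
      c + (b - c) * ((if k = p then 1 else 0) + if k = s then 1 else 0) := by
    intro k
    rw [hM]
    grind
  have hMppk : ∀ k, M p p k = b + (a - b) * if k = p then 1 else 0 := by
    intro k
    rw [hM]
    grind
  simp only [hMkps, hMpks, hMppk, add_mul, mul_add, mul_ite, mul_one, mul_zero, ite_mul,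
    zero_mul, sum_add_distrib, sum_ite_eq', mem_univ, if_true, ← mul_sum, hcol, hdiag,
    hanti p s] at h
  have h' : (3 * b - a - 2 * c) * (w p ⬝ᵥ δ s) = 0 := by linarith
  exact (mul_eq_zero.1 h').resolve_left (by linarith)

theorem eq_zero_of_firstOrderTensor_eq_zero {m a₂ b₂ a₃ b₃ c₃ : ℝ}
    (hli : LinearIndependent ℝ θ) (hθ : ∀ k, ∑ v, θ k v = 1) (hδ : ∀ k, ∑ v, δ k v = 0)
    (hM₁ : ∀ k, ∑ l, ∑ j, M k l j = m) (hm : m ≠ 0)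
    (hM₂ : ∀ k l, ∑ j, M k l j = if k = l then a₂ else b₂) (hab : a₂ ≠ b₂)
    (hM₃ : ∀ k l j, M k l j =
      if k = l ∧ l = j then a₃ else if k = l ∨ l = j ∨ k = j then b₃ else c₃)
    (habc : 3 * b₃ < a₃ + 2 * c₃) (hT : firstOrderTensor M θ δ = 0) : δ = 0 := by
  obtain ⟨w, hw⟩ := exists_dotProduct_eq_ite_of_linearIndependent hli
  have hΔ := sum_eq_zero_of_firstOrderTensor_eq_zero hθ hδ hM₁ hm hT
  have hspan := eq_neg_sum_smul_of_firstOrderTensor_eq_zero hw hθ hδ hM₂ hab hΔ hT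
  have hcol : ∀ p, ∑ k, w p ⬝ᵥ δ k = 0 := fun p => by rw [← dotProduct_sum, hΔ, dotProduct_zero]
  have hzero := dotProduct_eq_zero_of_firstOrderTensor_eq_zero hw hM₃ habc
    (dotProduct_eq_neg_dotProduct hw hspan) hcol hT
  ext p v
  simp [hspan p, hzero]

end FirstOrderTensor

def thirdMoment {K : ℕ} (ν0 : Measure (Fin K → ℝ)) (k l j : Fin K) : ℝ :=
  ∫ h, h k * h l * h j ∂ν0

section Mixing

variable {K : ℕ} {ν0 : Measure (Fin K → ℝ)}

lemma NiceMixing.ae_mem_simplex (hν0 : NiceMixing K ν0) : ∀ᵐ h ∂ν0, h ∈ simplex K :=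
  ae_iff.2 hν0.support

lemma NiceMixing.integrable (hν0 : NiceMixing K ν0) {F : (Fin K → ℝ) → ℝ}
    (hF : Continuous F) : Integrable F ν0 := by
  have := hν0.prob
  rw [← Measure.restrict_eq_self_of_ae_mem hν0.ae_mem_simplex]
  exact hF.continuousOn.integrableOn_compact (isCompact_stdSimplex ℝ (Fin K))

lemma NiceMixing.integral_comp_perm (hν0 : NiceMixing K ν0) (π : Equiv.Perm (Fin K))
    (F : (Fin K → ℝ) → ℝ) : ∫ h, F (h ∘ π) ∂ν0 = ∫ h, F h ∂ν0 := by
  conv_rhs => rw [← hν0.exch π]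
  exact (integral_map_equiv (MeasurableEquiv.arrowCongr' π.symm (MeasurableEquiv.refl ℝ)) F).symm

lemma NiceMixing.integral_comp_eq_of_injective (hν0 : NiceMixing K ν0) {ι : Type*} [Finite ι]
    (F : (ι → ℝ) → ℝ) {i j : ι → Fin K} (hi : i.Injective) (hj : j.Injective) :
    ∫ h, F (h ∘ i) ∂ν0 = ∫ h, F (h ∘ j) ∂ν0 := by
  obtain ⟨σ, hσ⟩ := Equiv.Perm.exists_extending_pair i j hi hj
  have hcomp : ∀ h : Fin K → ℝ, h ∘ j = (h ∘ σ) ∘ i := fun h => funext fun a => by simp [hσ]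
  simp_rw [hcomp]
  exact (hν0.integral_comp_perm σ fun h => F (h ∘ i)).symm

lemma NiceMixing.sum_integral_mul_coord (hν0 : NiceMixing K ν0) {F : (Fin K → ℝ) → ℝ}
    (hF : Continuous F) : ∑ j, ∫ h, F h * h j ∂ν0 = ∫ h, F h ∂ν0 := by
  rw [← integral_finsetSum _ fun j _ => hν0.integrable (F := fun h => F h * h j) (by fun_prop)]
  refine integral_congr_ae ?_
  filter_upwards [hν0.ae_mem_simplex] with h hh
  simp [← mul_sum, hh.2]

lemma NiceMixing.integral_coord (hν0 : NiceMixing K ν0) (k : Fin K) :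
    ∫ h, h k ∂ν0 = (K : ℝ)⁻¹ := by
  have := hν0.prob
  have hsum : ∑ j, ∫ h, h j ∂ν0 = 1 := by
    simpa using hν0.sum_integral_mul_coord (F := fun _ => 1) continuous_const
  have hall : ∀ j, ∫ h, h j ∂ν0 = ∫ h, h k ∂ν0 := fun j =>
    hν0.integral_comp_eq_of_injective (fun x : Unit → ℝ => x ()) (i := fun _ => j)
      (j := fun _ => k) (Function.injective_of_subsingleton _)
      (Function.injective_of_subsingleton _)
  simp only [hall, sum_const, card_univ, Fintype.card_fin, nsmul_eq_mul] at hsum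
  exact eq_inv_of_mul_eq_one_right hsum

lemma NiceMixing.sum_thirdMoment (hν0 : NiceMixing K ν0) (k l : Fin K) :
    ∑ j, thirdMoment ν0 k l j = ∫ h, h k * h l ∂ν0 :=
  hν0.sum_integral_mul_coord (F := fun h => h k * h l) (by fun_prop)

lemma NiceMixing.sum_sum_thirdMoment (hν0 : NiceMixing K ν0) (k : Fin K) :
    ∑ l, ∑ j, thirdMoment ν0 k l j = (K : ℝ)⁻¹ := by
  simp only [hν0.sum_thirdMoment]
  rw [hν0.sum_integral_mul_coord (F := fun h => h k) (by fun_prop), hν0.integral_coord]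

lemma NiceMixing.exists_sum_thirdMoment_eq (hν0 : NiceMixing K ν0) (hK : 2 ≤ K) :
    ∃ a b : ℝ, b < a ∧ ∀ k l, ∑ j, thirdMoment ν0 k l j = if k = l then a else b := by
  obtain ⟨i₀, i₁, hi⟩ : ∃ i₀ i₁ : Fin K, i₀ ≠ i₁ :=
    ⟨⟨0, by omega⟩, ⟨1, by omega⟩, by simp [Fin.ext_iff]⟩
  refine ⟨∫ h, h i₀ * h i₀ ∂ν0, ∫ h, h i₀ * h i₁ ∂ν0, by simpa [sq] using hν0.mom2 i₀ i₁ hi,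
    fun k l => ?_⟩
  rw [hν0.sum_thirdMoment]
  split_ifs with hkl
  · subst hkl
    exact hν0.integral_comp_eq_of_injective (fun x : Unit → ℝ => x () * x ())
      (i := fun _ => k) (j := fun _ => i₀) (Function.injective_of_subsingleton _)
      (Function.injective_of_subsingleton _)
  · simpa using hν0.integral_comp_eq_of_injective (fun x => x 0 * x 1)
      (injective_pair_iff_ne.2 hkl) (injective_pair_iff_ne.2 hi)

lemma NiceMixing.exists_thirdMoment_eq (hν0 : NiceMixing K ν0) (hK : 2 ≤ K) :
    ∃ a b c : ℝ, 3 * b < a + 2 * c ∧ ∀ k l j, thirdMoment ν0 k l j =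
      if k = l ∧ l = j then a else if k = l ∨ l = j ∨ k = j then b else c := by
  obtain ⟨i₀, i₁, hi⟩ : ∃ i₀ i₁ : Fin K, i₀ ≠ i₁ :=
    ⟨⟨0, by omega⟩, ⟨1, by omega⟩, by simp [Fin.ext_iff]⟩
  set a := ∫ h, h i₀ * h i₀ * h i₀ ∂ν0
  set b := ∫ h, h i₀ * h i₀ * h i₁ ∂ν0
  have hdiag : ∀ k, ∫ h, h k * h k * h k ∂ν0 = a := fun k =>
    hν0.integral_comp_eq_of_injective (fun x : Unit → ℝ => x () * x () * x ())
      (i := fun _ => k) (j := fun _ => i₀) (Function.injective_of_subsingleton _)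
      (Function.injective_of_subsingleton _)
  have hpair : ∀ k j, k ≠ j → ∫ h, h k * h k * h j ∂ν0 = b := fun k j hkj => by
    simpa using hν0.integral_comp_eq_of_injective (fun x => x 0 * x 0 * x 1)
      (injective_pair_iff_ne.2 hkj) (injective_pair_iff_ne.2 hi)
  obtain ⟨c, hc, hdistinct⟩ : ∃ c, 3 * b < a + 2 * c ∧ ∀ k l j : Fin K, k ≠ l → l ≠ j → k ≠ j →
      ∫ h, h k * h l * h j ∂ν0 = c := by
    by_cases hK3 : 3 ≤ K
    · obtain ⟨j₀, j₁, j₂, h₀₁, h₁₂, h₀₂⟩ : ∃ j₀ j₁ j₂ : Fin K, j₀ ≠ j₁ ∧ j₁ ≠ j₂ ∧ j₀ ≠ j₂ :=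
        ⟨⟨0, by omega⟩, ⟨1, by omega⟩, ⟨2, hK3⟩, by simp [Fin.ext_iff]⟩
      refine ⟨∫ h, h j₀ * h j₁ * h j₂ ∂ν0, ?_, fun k l j hkl hlj hkj => ?_⟩
      · rw [← hdiag j₀, ← hpair j₀ j₁ h₀₁]
        simpa [pow_succ] using hν0.mom3 j₀ j₁ j₂ h₀₁ h₁₂ h₀₂
      · simpa using hν0.integral_comp_eq_of_injective (fun x => x 0 * x 1 * x 2)
          (injective_triple_of_ne hkl hlj hkj) (injective_triple_of_ne h₀₁ h₁₂ h₀₂)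
    -- with only two topics no three indices are distinct, so any large `c` will do
    · refine ⟨(3 * b - a) / 2 + 1, by linarith, fun k l j hkl hlj hkj => ?_⟩
      simp only [ne_eq, Fin.ext_iff] at hkl hlj hkj
      omega
  refine ⟨a, b, c, hc, fun k l j => ?_⟩
  unfold thirdMoment
  split_ifs with h₁ h₂
  · obtain ⟨rfl, rfl⟩ := h₁
    exact hdiag k
  · rcases h₂ with rfl | rfl | rfl
    · exact hpair k j (by tauto)
    · rw [← hpair l k (by tauto)]
      congr 1 with h
      ring
    · rw [← hpair k l (by tauto)]
      congr 1 with h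
      ring
  · push Not at h₂
    exact hdistinct k l j h₂.1 h₂.2.1 h₂.2.2

end Mixing

section Integrand

variable {V K : ℕ} {ν0 : Measure (Fin K → ℝ)}

@[fun_prop]
lemma continuous_pWord (θ : Fin K → Fin V → ℝ) (v : Fin V) :
    Continuous fun h => pWord θ h v := by
  unfold pWord
  fun_prop

lemma le_pWord {θ : Fin K → Fin V → ℝ} {h : Fin K → ℝ} (hh : h ∈ simplex K) {c : ℝ} {v : Fin V}
    (hθ : ∀ k, c ≤ θ k v) : c ≤ pWord θ h v :=
  calc c = ∑ k, h k * c := by rw [← sum_mul, hh.2, one_mul]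
    _ ≤ pWord θ h v := sum_le_sum fun k _ => mul_le_mul_of_nonneg_left (hθ k) (hh.1 k)

lemma integral_pWord_mul_pWord_mul_pWord (hν0 : NiceMixing K ν0) (α β γ : Fin K → Fin V → ℝ)
    (v₁ v₂ v₃ : Fin V) :
    ∫ h, pWord α h v₁ * pWord β h v₂ * pWord γ h v₃ ∂ν0 =
      momentTensor (thirdMoment ν0) α β γ v₁ v₂ v₃ := by
  simp only [pWord, sum_mul_sum_mul_sum, momentTensor, thirdMoment]
  rw [integral_finsetSum _ fun _ _ => hν0.integrable (by fun_prop)]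
  refine sum_congr rfl fun k _ => ?_
  rw [integral_finsetSum _ fun _ _ => hν0.integrable (by fun_prop)]
  refine sum_congr rfl fun l _ => ?_
  rw [integral_finsetSum _ fun _ _ => hν0.integrable (by fun_prop)]
  refine sum_congr rfl fun j _ => ?_
  rw [← integral_mul_const]
  congr 1 with h
  ring

lemma integral_degen_integrand_eq {c0 : ℝ} (hν0 : NiceMixing K ν0) (hc0 : 0 < c0)
    {θ : Fin K → Fin V → ℝ} (hθ : θ ∈ Theta c0 V K) (δ : Fin K → Fin V → ℝ) (x : Fin 3 → Fin V) :
    ∫ h, pDoc 3 θ h x * ∑ S ∈ powersetCard 1 (univ : Finset (Fin 3)),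
        ∏ i ∈ S, ((∑ k, h k * δ k (x i)) / pWord θ h (x i)) ∂ν0 =
      firstOrderTensor (thirdMoment ν0) θ δ (x 0) (x 1) (x 2) := by
  have hae : (fun h => pDoc 3 θ h x * ∑ S ∈ powersetCard 1 (univ : Finset (Fin 3)),
        ∏ i ∈ S, ((∑ k, h k * δ k (x i)) / pWord θ h (x i))) =ᵐ[ν0] fun h =>
      pWord δ h (x 0) * pWord θ h (x 1) * pWord θ h (x 2) +
        pWord θ h (x 0) * pWord δ h (x 1) * pWord θ h (x 2) +
        pWord θ h (x 0) * pWord θ h (x 1) * pWord δ h (x 2) := by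
    filter_upwards [hν0.ae_mem_simplex] with h hh
    have hp : ∀ v, pWord θ h v ≠ 0 := fun v =>
      (hc0.trans_le (le_pWord hh fun k => hθ.1 k v)).ne'
    simp only [powersetCard_one, sum_map, Function.Embedding.coeFn_mk, prod_singleton,
      Fin.sum_univ_three, pDoc, Fin.prod_univ_three]
    field_simp [hp]
    rfl
  rw [integral_congr_ae hae, integral_add, integral_add]
  · simp only [integral_pWord_mul_pWord_mul_pWord hν0, firstOrderTensor, Pi.add_apply]
  all_goals exact hν0.integrable (by fun_prop)

end Integrand

theorem NiceMixing.eq_zero_of_firstOrderTensor_thirdMoment_eq_zero {V K : ℕ}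
    {ν0 : Measure (Fin K → ℝ)}
    (hν0 : NiceMixing K ν0) (hK : 2 ≤ K) {θ δ : Fin K → Fin V → ℝ} (hli : LinearIndependent ℝ θ)
    (hθ : ∀ k, ∑ v, θ k v = 1) (hδ : ∀ k, ∑ v, δ k v = 0)
    (hT : firstOrderTensor (thirdMoment ν0) θ δ = 0) : δ = 0 := by
  obtain ⟨a₂, b₂, hab₂, hM₂⟩ := hν0.exists_sum_thirdMoment_eq hK
  obtain ⟨a₃, b₃, c₃, habc₃, hM₃⟩ := hν0.exists_thirdMoment_eq hK
  exact eq_zero_of_firstOrderTensor_eq_zero hli hθ hδ hν0.sum_sum_thirdMoment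
    (inv_ne_zero (by norm_cast; omega)) hM₂ hab₂.ne' hM₃ habc₃ hT

lemma degen_three_one_eq {V K : ℕ} {c0 : ℝ} {ν0 : Measure (Fin K → ℝ)} (hν0 : NiceMixing K ν0)
    (hc0 : 0 < c0) {θ : Fin K → Fin V → ℝ} (hθ : θ ∈ Theta c0 V K) :
    degen ν0 3 θ 1 = sInf ((fun δ => ∑ x : Fin 3 → Fin V,
      |firstOrderTensor (thirdMoment ν0) θ δ (x 0) (x 1) (x 2)|) ''
      {δ | norm1 δ = 1 ∧ ∀ k, ∑ ℓ, δ k ℓ = 0}) := by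
  simp only [degen, integral_degen_integrand_eq hν0 hc0 hθ]
  congr 1
  ext r
  simp [eq_comm, and_assoc]

/-- **Lemma 1 (first-order identifiability under linear independence).**
If `m = 3` and the topic vectors `θ₁,…,θ_K` are linearly independent, then `𝔡_{3,1}(θ) > 0`. -/
theorem first_order_of_linearIndependent
    {V K : ℕ} (hV : 2 ≤ V) (hK : 2 ≤ K) {c0 : ℝ} (hc0 : 0 < c0)
    (ν0 : Measure (Fin K → ℝ)) (hν0 : NiceMixing K ν0)
    (θ : Fin K → Fin V → ℝ) (hθ : θ ∈ Theta c0 V K)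
    (hli : LinearIndependent ℝ θ) :
    0 < degen ν0 3 θ 1 := by
  rw [degen_three_one_eq hν0 hc0 hθ]
  refine isCompact_setOf_norm1_eq_one_and_sum_eq_zero.lt_sInf_image
    (exists_norm1_eq_one_and_sum_eq_zero (by omega) hV)
    (continuous_finsetSum _ fun x _ => (continuous_firstOrderTensor _ θ _ _ _).abs).continuousOn
    fun δ ⟨hδ₁, hδ₀⟩ => ?_
  obtain ⟨v₁, v₂, v₃, hT⟩ : ∃ v₁ v₂ v₃, firstOrderTensor (thirdMoment ν0) θ δ v₁ v₂ v₃ ≠ 0 := by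
    by_contra! h
    have hδ := hν0.eq_zero_of_firstOrderTensor_thirdMoment_eq_zero hK hli hθ.2 hδ₀ (funext₃ h)
    simp [hδ, norm1] at hδ₁
  exact sum_pos' (fun _ _ => abs_nonneg _)
    ⟨![v₁, v₂, v₃], mem_univ _, abs_pos.2 (by simpa using hT)⟩

end TopicModel
end
end

section
/- (Lemma 2: duplicate topics destroy first-order identifiability.) Let θ ∈ Θ_{c_0} be such that θ_j = θ_k for some j ≠ k in [K]. Then 𝔡_{m,1}(θ) = 0 for every m ≥ 2. -/
open MeasureTheory Filter

noncomputable section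

namespace TopicModel

/-- **Lemma 2 (duplicate topics destroy first-order identifiability).**
If `θ_j = θ_k` for some `j ≠ k`, then `𝔡_{m,1}(θ) = 0` for every `m ≥ 2`. -/
theorem degen_one_eq_zero_of_duplicate
    {V K : ℕ} (hV : 2 ≤ V) (hK : 2 ≤ K) {c0 : ℝ} (hc0 : 0 < c0)
    (ν0 : Measure (Fin K → ℝ)) (hν0 : NiceMixing K ν0)
    (θ : Fin K → Fin V → ℝ) (hθ : θ ∈ Theta c0 V K)
    (hdup : ∃ j k : Fin K, j ≠ k ∧ θ j = θ k) :
    ∀ m : ℕ, 2 ≤ m → degen ν0 m θ 1 = 0 := by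
  intro m hm
  obtain ⟨j, k, hjk, hθjk⟩ := hdup
  have hV1 : (0 : ℕ) < V := by omega
  have hV2 : (1 : ℕ) < V := by omega
  set i0 : Fin V := ⟨0, hV1⟩ with hi0def
  set i1 : Fin V := ⟨1, hV2⟩ with hi1def
  have hi01 : i0 ≠ i1 := by simp [hi0def, hi1def, Fin.ext_iff]
  set w : Fin V → ℝ := fun ℓ => if ℓ = i0 then 1/4 else if ℓ = i1 then -(1/4) else 0
    with hwdef
  set δ : Fin K → Fin V → ℝ :=
    fun k' ℓ => if k' = j then w ℓ else if k' = k then -w ℓ else 0 with hδdef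
  -- basic sums for w
  have hsumabs : ∑ ℓ, |w ℓ| = 1/2 := by
    have hpt : ∀ ℓ, |w ℓ| =
        (if ℓ = i0 then (1/4 : ℝ) else 0) + (if ℓ = i1 then (1/4 : ℝ) else 0) := by
      intro ℓ
      by_cases h0 : ℓ = i0
      · subst h0; simp [hwdef, hi01]
      · by_cases h1 : ℓ = i1
        · subst h1; simp [hwdef, h0]
        · simp [hwdef, h0, h1]
    rw [Finset.sum_congr rfl (fun ℓ _ => hpt ℓ), Finset.sum_add_distrib]
    simp
    norm_num
  have hsumw : ∑ ℓ, w ℓ = 0 := by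
    have hpt : ∀ ℓ, w ℓ =
        (if ℓ = i0 then (1/4 : ℝ) else 0) + (if ℓ = i1 then -(1/4 : ℝ) else 0) := by
      intro ℓ
      by_cases h0 : ℓ = i0
      · subst h0; simp [hwdef, hi01]
      · by_cases h1 : ℓ = i1
        · subst h1; simp [hwdef, h0]
        · simp [hwdef, h0, h1]
    rw [Finset.sum_congr rfl (fun ℓ _ => hpt ℓ), Finset.sum_add_distrib]
    simp
  -- norm1 δ = 1
  have hnorm : norm1 δ = 1 := by
    unfold norm1
    have hpt : ∀ k', ∑ ℓ, |δ k' ℓ| =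
        (if k' = j then (1/2 : ℝ) else 0) + (if k' = k then (1/2 : ℝ) else 0) := by
      intro k'
      by_cases h0 : k' = j
      · subst h0; simp [hδdef, hjk, hsumabs]
      · by_cases h1 : k' = k
        · subst h1
          simp only [hδdef, if_neg h0, if_pos rfl, abs_neg]
          simp [hsumabs, h0]
        · simp [hδdef, h0, h1]
    rw [Finset.sum_congr rfl (fun k' _ => hpt k'), Finset.sum_add_distrib]
    simp
    norm_num
  -- row sums zero
  have hrow : ∀ k', ∑ ℓ, δ k' ℓ = 0 := by
    intro k'
    by_cases h0 : k' = j
    · subst h0; simp [hδdef, hsumw]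
    · by_cases h1 : k' = k
      · subst h1
        have he : ∀ ℓ, δ k' ℓ = -w ℓ := fun ℓ => by simp [hδdef, h0]
        rw [Finset.sum_congr rfl (fun ℓ _ => he ℓ)]
        simp [hsumw]
      · simp [hδdef, h0, h1]
  -- the swap permutation
  set π : Equiv.Perm (Fin K) := Equiv.swap j k with hπdef
  have hθπ : ∀ k', θ (π k') = θ k' := by
    intro k'
    by_cases h0 : k' = j
    · subst h0; simp [hπdef, Equiv.swap_apply_left, hθjk]
    · by_cases h1 : k' = k
      · subst h1; simp [hπdef, Equiv.swap_apply_right, ← hθjk]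
      · simp [hπdef, Equiv.swap_apply_of_ne_of_ne h0 h1]
  have hδπ : ∀ k' v, δ (π k') v = -δ k' v := by
    intro k' v
    by_cases h0 : k' = j
    · subst h0; simp [hπdef, Equiv.swap_apply_left, hδdef, Ne.symm hjk]
    · by_cases h1 : k' = k
      · subst h1; simp [hπdef, Equiv.swap_apply_right, hδdef, h0, Ne.symm hjk]
      · simp [hπdef, Equiv.swap_apply_of_ne_of_ne h0 h1, hδdef, h0, h1]
  -- invariance of pWord under composing h with π
  have hpw : ∀ (h : Fin K → ℝ) (v : Fin V), pWord θ (h ∘ π) v = pWord θ h v := by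
    intro h v
    unfold pWord
    calc ∑ k', (h ∘ π) k' * θ k' v
        = ∑ k', (h ∘ π) k' * θ (π k') v := by
          exact Finset.sum_congr rfl fun k' _ => by rw [hθπ]
      _ = ∑ k', h k' * θ k' v := by
          simpa using Equiv.sum_comp π (fun a => h a * θ a v)
  have hpd : ∀ (h : Fin K → ℝ) (x : Fin m → Fin V), pDoc m θ (h ∘ π) x = pDoc m θ h x := by
    intro h x
    unfold pDoc
    exact Finset.prod_congr rfl fun i _ => hpw h (x i)
  -- sign flip of the δ-mixture
  have hδmix : ∀ (h : Fin K → ℝ) (v : Fin V),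
      (∑ k', (h ∘ π) k' * δ k' v) = -∑ k', h k' * δ k' v := by
    intro h v
    have h1 : ∑ k', (h ∘ π) k' * δ k' v = ∑ k', h k' * δ (π k') v := by
      have := Equiv.sum_comp π (fun a => h (π a) * δ a v)
      have hc := (Equiv.sum_comp π (fun a => h (π a) * δ a v)).symm
      simp only [Function.comp] at hc ⊢
      rw [hc]
      refine Finset.sum_congr rfl fun k' _ => ?_
      simp only [hπdef]
      rw [Equiv.swap_apply_self]
    rw [h1]
    rw [← Finset.sum_neg_distrib]
    exact Finset.sum_congr rfl fun k' _ => by rw [hδπ]; ring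
  -- the integrand for each x
  set F : (Fin m → Fin V) → (Fin K → ℝ) → ℝ := fun x h =>
    pDoc m θ h x *
      ∑ S ∈ Finset.powersetCard 1 (Finset.univ : Finset (Fin m)),
        ∏ i ∈ S, ((∑ k', h k' * δ k' (x i)) / pWord θ h (x i)) with hFdef
  have hFneg : ∀ x h, F x (h ∘ π) = -F x h := by
    intro x h
    simp only [hFdef]
    rw [hpd h x]
    have hsum : (∑ S ∈ Finset.powersetCard 1 (Finset.univ : Finset (Fin m)),
        ∏ i ∈ S, ((∑ k', (h ∘ π) k' * δ k' (x i)) / pWord θ (h ∘ π) (x i))) =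
        -∑ S ∈ Finset.powersetCard 1 (Finset.univ : Finset (Fin m)),
        ∏ i ∈ S, ((∑ k', h k' * δ k' (x i)) / pWord θ h (x i)) := by
      rw [← Finset.sum_neg_distrib]
      refine Finset.sum_congr rfl fun S hS => ?_
      obtain ⟨i, rfl⟩ := Finset.card_eq_one.mp (Finset.mem_powersetCard.mp hS).2
      rw [Finset.prod_singleton, Finset.prod_singleton, hpw h (x i), hδmix h (x i),
        neg_div]
    rw [hsum]; ring
  -- measurability
  have hFmeas : ∀ x, Measurable (F x) := by
    intro x
    apply Measurable.mul
    · apply Finset.measurable_prod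
      intro i _
      apply Finset.measurable_sum
      intro k' _
      exact (measurable_pi_apply k').mul_const _
    · apply Finset.measurable_sum
      intro S _
      apply Finset.measurable_prod
      intro i _
      apply Measurable.div
      · apply Finset.measurable_sum
        intro k' _
        exact (measurable_pi_apply k').mul_const _
      · apply Finset.measurable_sum
        intro k' _
        exact (measurable_pi_apply k').mul_const _
  have hπmeas : Measurable (fun h : Fin K → ℝ => h ∘ π) := by
    exact measurable_pi_lambda _ fun i => measurable_pi_apply (π i)
  -- each integral vanishes
  have hint : ∀ x, (∫ h, F x h ∂ν0) = 0 := by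
    intro x
    have hmap : (∫ h, F x h ∂ν0) = ∫ h, F x (h ∘ π) ∂ν0 := by
      conv_lhs => rw [← hν0.exch π]
      rw [MeasureTheory.integral_map hπmeas.aemeasurable
        ((hFmeas x).aestronglyMeasurable)]
    have : (∫ h, F x (h ∘ π) ∂ν0) = -∫ h, F x h ∂ν0 := by
      rw [← MeasureTheory.integral_neg]
      exact MeasureTheory.integral_congr_ae (Filter.Eventually.of_forall fun h =>
        hFneg x h)
    rw [this] at hmap
    linarith
  -- 0 is in the defining set
  have hmem : (0 : ℝ) ∈ {r : ℝ | ∃ δ : Fin K → Fin V → ℝ, norm1 δ = 1 ∧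
      (∀ k, ∑ ℓ, δ k ℓ = 0) ∧
      r = ∑ x : Fin m → Fin V,
        |∫ h, pDoc m θ h x *
          ∑ S ∈ Finset.powersetCard 1 (Finset.univ : Finset (Fin m)),
            ∏ i ∈ S, ((∑ k, h k * δ k (x i)) / pWord θ h (x i)) ∂ν0|} := by
    refine ⟨δ, hnorm, hrow, ?_⟩
    symm
    refine Finset.sum_eq_zero fun x _ => ?_
    rw [show (∫ h, pDoc m θ h x *
        ∑ S ∈ Finset.powersetCard 1 (Finset.univ : Finset (Fin m)),
          ∏ i ∈ S, ((∑ k', h k' * δ k' (x i)) / pWord θ h (x i)) ∂ν0) =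
        ∫ h, F x h ∂ν0 from rfl, hint x, abs_zero]
  -- every element of the set is nonnegative
  have hnonneg : ∀ r ∈ {r : ℝ | ∃ δ : Fin K → Fin V → ℝ, norm1 δ = 1 ∧
      (∀ k, ∑ ℓ, δ k ℓ = 0) ∧
      r = ∑ x : Fin m → Fin V,
        |∫ h, pDoc m θ h x *
          ∑ S ∈ Finset.powersetCard 1 (Finset.univ : Finset (Fin m)),
            ∏ i ∈ S, ((∑ k, h k * δ k (x i)) / pWord θ h (x i)) ∂ν0|}, 0 ≤ r := by
    rintro r ⟨δ', _, _, rfl⟩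
    exact Finset.sum_nonneg fun x _ => abs_nonneg _
  unfold degen
  exact le_antisymm (csInf_le ⟨0, hnonneg⟩ hmem) (le_csInf ⟨0, hmem⟩ hnonneg)

end TopicModel
end
end

section
/- (Corollary 1: monotonicity of the order of degeneracy.) For every θ ∈ Θ_{c_0} and all integers m′ ≥ m ≥ 2, 𝔭(m′;θ) ≤ 𝔭(m;θ) (as elements of ℕ ∪ {∞}). -/
open MeasureTheory Filter

noncomputable section

namespace TopicModel

section Aux

variable {V K : ℕ} {c0 : ℝ}

/-- The integrand appearing in the definition of `degen`. -/
def Fint (θ δ : Fin K → Fin V → ℝ) (p m : ℕ) (x : Fin m → Fin V) (h : Fin K → ℝ) : ℝ :=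
  pDoc m θ h x *
    ∑ S ∈ Finset.powersetCard p (Finset.univ : Finset (Fin m)),
      ∏ i ∈ S, ((∑ k, h k * δ k (x i)) / pWord θ h (x i))

lemma degen_eq (ν0 : Measure (Fin K → ℝ)) (m : ℕ) (θ : Fin K → Fin V → ℝ) (p : ℕ) :
    degen ν0 m θ p = sInf {r : ℝ | ∃ δ : Fin K → Fin V → ℝ,
      norm1 δ = 1 ∧ (∀ k, ∑ ℓ, δ k ℓ = 0) ∧
      r = ∑ x : Fin m → Fin V, |∫ h, Fint θ δ p m x h ∂ν0|} := rfl

lemma measurable_Fint (θ δ : Fin K → Fin V → ℝ) (p m : ℕ) (x : Fin m → Fin V) :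
    Measurable (Fint θ δ p m x) := by
  unfold Fint pDoc pWord
  apply Measurable.mul
  · exact Finset.measurable_prod _ fun i _ =>
      Finset.measurable_sum _ fun k _ => (measurable_pi_apply k).mul_const _
  · refine Finset.measurable_sum _ fun S _ => Finset.measurable_prod _ fun i _ => ?_
    exact Measurable.div
      (Finset.measurable_sum _ fun k _ => (measurable_pi_apply k).mul_const _)
      (Finset.measurable_sum _ fun k _ => (measurable_pi_apply k).mul_const _)

lemma pWord_lb (hc0 : 0 < c0) {θ : Fin K → Fin V → ℝ} (hθ : θ ∈ Theta c0 V K)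
    {h : Fin K → ℝ} (hh : h ∈ simplex K) (v : Fin V) : c0 ≤ pWord θ h v := by
  have : ∑ k, h k * c0 ≤ ∑ k, h k * θ k v :=
    Finset.sum_le_sum fun k _ => mul_le_mul_of_nonneg_left (hθ.1 k v) (hh.1 k)
  calc c0 = (∑ k, h k) * c0 := by rw [hh.2, one_mul]
    _ = ∑ k, h k * c0 := by rw [Finset.sum_mul]
    _ ≤ pWord θ h v := this

lemma pWord_ub {θ : Fin K → Fin V → ℝ} (hθnn : ∀ k ℓ, (0:ℝ) ≤ θ k ℓ)
    (hθ1 : ∀ k, ∑ ℓ, θ k ℓ = 1)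
    {h : Fin K → ℝ} (hh : h ∈ simplex K) (v : Fin V) : pWord θ h v ≤ 1 := by
  have hb : ∀ k, θ k v ≤ 1 := fun k => by
    rw [← hθ1 k]
    exact Finset.single_le_sum (fun ℓ _ => hθnn k ℓ) (Finset.mem_univ v)
  calc pWord θ h v = ∑ k, h k * θ k v := rfl
    _ ≤ ∑ k, h k * 1 := Finset.sum_le_sum fun k _ =>
        mul_le_mul_of_nonneg_left (hb k) (hh.1 k)
    _ = 1 := by simp [hh.2]

lemma abs_Fint_le (hc0 : 0 < c0) {θ : Fin K → Fin V → ℝ} (hθ : θ ∈ Theta c0 V K)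
    {δ : Fin K → Fin V → ℝ} (hδ : norm1 δ = 1) {p m : ℕ} (x : Fin m → Fin V)
    {h : Fin K → ℝ} (hh : h ∈ simplex K) :
    |Fint θ δ p m x h| ≤
      ((Finset.powersetCard p (Finset.univ : Finset (Fin m))).card : ℝ) * (1 / c0) ^ p := by
  have hθnn : ∀ k ℓ, (0:ℝ) ≤ θ k ℓ := fun k ℓ => le_trans hc0.le (hθ.1 k ℓ)
  have hk1 : ∀ k, h k ≤ 1 := fun k => by
    rw [← hh.2]; exact Finset.single_le_sum (fun i _ => hh.1 i) (Finset.mem_univ k)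
  have hdb : ∀ v, |∑ k, h k * δ k v| ≤ 1 := by
    intro v
    calc |∑ k, h k * δ k v| ≤ ∑ k, |h k * δ k v| := Finset.abs_sum_le_sum_abs _ _
      _ ≤ ∑ k, |δ k v| := Finset.sum_le_sum fun k _ => by
          rw [abs_mul, abs_of_nonneg (hh.1 k)]
          exact mul_le_of_le_one_left (abs_nonneg _) (hk1 k)
      _ ≤ ∑ k, ∑ ℓ, |δ k ℓ| := Finset.sum_le_sum fun k _ =>
          Finset.single_le_sum (f := fun ℓ => |δ k ℓ|) (fun ℓ _ => abs_nonneg _)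
            (Finset.mem_univ v)
      _ = 1 := hδ
  have hgb : ∀ v, |(∑ k, h k * δ k v) / pWord θ h v| ≤ 1 / c0 := by
    intro v
    rw [abs_div, abs_of_nonneg (le_trans hc0.le (pWord_lb hc0 hθ hh v))]
    exact div_le_div₀ zero_le_one (hdb v) hc0 (pWord_lb hc0 hθ hh v)
  have hc0' : (0:ℝ) ≤ 1 / c0 := by positivity
  have hsumb : |∑ S ∈ Finset.powersetCard p (Finset.univ : Finset (Fin m)),
      ∏ i ∈ S, ((∑ k, h k * δ k (x i)) / pWord θ h (x i))| ≤
      ((Finset.powersetCard p (Finset.univ : Finset (Fin m))).card : ℝ) * (1 / c0) ^ p := by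
    calc |∑ S ∈ Finset.powersetCard p (Finset.univ : Finset (Fin m)),
        ∏ i ∈ S, ((∑ k, h k * δ k (x i)) / pWord θ h (x i))|
        ≤ ∑ S ∈ Finset.powersetCard p (Finset.univ : Finset (Fin m)),
          |∏ i ∈ S, ((∑ k, h k * δ k (x i)) / pWord θ h (x i))| :=
        Finset.abs_sum_le_sum_abs _ _
      _ ≤ ∑ S ∈ Finset.powersetCard p (Finset.univ : Finset (Fin m)), (1 / c0) ^ p := by
        refine Finset.sum_le_sum fun S hS => ?_
        have hcard : S.card = p := (Finset.mem_powersetCard.mp hS).2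
        rw [Finset.abs_prod, ← hcard, ← Finset.prod_const]
        exact Finset.prod_le_prod (fun i _ => abs_nonneg _) fun i _ => hgb (x i)
      _ = ((Finset.powersetCard p (Finset.univ : Finset (Fin m))).card : ℝ) * (1 / c0) ^ p := by
        rw [Finset.sum_const, nsmul_eq_mul]
  have hpd : |pDoc m θ h x| ≤ 1 := by
    have h0 : ∀ i : Fin m, (0:ℝ) ≤ pWord θ h (x i) := fun i =>
      le_trans hc0.le (pWord_lb hc0 hθ hh (x i))
    have hpdnn : 0 ≤ pDoc m θ h x := Finset.prod_nonneg fun i _ => h0 i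
    rw [abs_of_nonneg hpdnn]
    exact Finset.prod_le_one (fun i _ => h0 i) fun i _ => pWord_ub hθnn hθ.2 hh (x i)
  calc |Fint θ δ p m x h| = |pDoc m θ h x| * |_| := abs_mul _ _
    _ ≤ 1 * (((Finset.powersetCard p (Finset.univ : Finset (Fin m))).card : ℝ) * (1 / c0) ^ p) :=
      mul_le_mul hpd hsumb (abs_nonneg _) zero_le_one
    _ = _ := one_mul _

lemma ae_simplex {ν0 : Measure (Fin K → ℝ)} (hν0 : NiceMixing K ν0) :
    ∀ᵐ h ∂ν0, h ∈ simplex K := by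
  rw [MeasureTheory.ae_iff]
  exact hν0.support

lemma integrable_Fint {ν0 : Measure (Fin K → ℝ)} (hν0 : NiceMixing K ν0)
    (hc0 : 0 < c0) {θ : Fin K → Fin V → ℝ} (hθ : θ ∈ Theta c0 V K)
    {δ : Fin K → Fin V → ℝ} (hδ : norm1 δ = 1) (p m : ℕ) (x : Fin m → Fin V) :
    Integrable (Fint θ δ p m x) ν0 := by
  haveI := hν0.prob
  refine Integrable.mono'
    (integrable_const (((Finset.powersetCard p (Finset.univ : Finset (Fin m))).card : ℝ) *
      (1 / c0) ^ p))
    (measurable_Fint θ δ p m x).aestronglyMeasurable ?_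
  exact (ae_simplex hν0).mono fun h hh => by
    simpa [Real.norm_eq_abs] using abs_Fint_le hc0 hθ hδ x hh

lemma sum_powersetCard_insert {ι : Type*} [DecidableEq ι] {a : ι} {s : Finset ι}
    (ha : a ∉ s) (q : ℕ) (g : ι → ℝ) :
    ∑ S ∈ Finset.powersetCard (q + 1) (insert a s), ∏ i ∈ S, g i
      = (∑ S ∈ Finset.powersetCard (q + 1) s, ∏ i ∈ S, g i)
        + g a * ∑ S ∈ Finset.powersetCard q s, ∏ i ∈ S, g i := by
  rw [Finset.powersetCard_succ_insert ha]
  rw [Finset.sum_union]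
  · congr 1
    rw [Finset.sum_image, Finset.mul_sum]
    · refine Finset.sum_congr rfl fun S hS => ?_
      have haS : a ∉ S := fun hmem =>
        ha ((Finset.mem_powersetCard.mp hS).1 hmem)
      rw [Finset.prod_insert haS]
    · intro S hS T hT hST
      have haS : a ∉ S := fun hmem => ha ((Finset.mem_powersetCard.mp hS).1 hmem)
      have haT : a ∉ T := fun hmem => ha ((Finset.mem_powersetCard.mp hT).1 hmem)
      have := congrArg (fun U => Finset.erase U a) hST
      simpa [Finset.erase_insert haS, Finset.erase_insert haT] using this
  · rw [Finset.disjoint_left]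
    intro S hS hS'
    obtain ⟨T, hT, rfl⟩ := Finset.mem_image.mp hS'
    exact ha ((Finset.mem_powersetCard.mp hS).1 (Finset.mem_insert_self a T))

lemma sum_powersetCard_univ_succ (m q : ℕ) (g : Fin (m + 1) → ℝ) :
    ∑ S ∈ Finset.powersetCard (q + 1) (Finset.univ : Finset (Fin (m + 1))), ∏ i ∈ S, g i
      = (∑ S ∈ Finset.powersetCard (q + 1) (Finset.univ : Finset (Fin m)),
          ∏ i ∈ S, g i.succ)
        + g 0 * ∑ S ∈ Finset.powersetCard q (Finset.univ : Finset (Fin m)),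
          ∏ i ∈ S, g i.succ := by
  have key : ∀ r : ℕ,
      ∑ S ∈ Finset.powersetCard r
        ((Finset.univ : Finset (Fin m)).map ⟨Fin.succ, Fin.succ_injective _⟩), ∏ i ∈ S, g i
      = ∑ S ∈ Finset.powersetCard r (Finset.univ : Finset (Fin m)), ∏ i ∈ S, g i.succ := by
    intro r
    rw [Finset.powersetCard_map, Finset.sum_map]
    refine Finset.sum_congr rfl fun S _ => ?_
    rw [RelEmbedding.coe_toEmbedding, Finset.mapEmbedding_apply, Finset.prod_map]
    rfl
  rw [Fin.univ_succ, Finset.cons_eq_insert,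
    sum_powersetCard_insert (by simp), key, key]

lemma pDoc_cons (m : ℕ) (θ : Fin K → Fin V → ℝ) (h : Fin K → ℝ) (y : Fin V)
    (x : Fin m → Fin V) :
    pDoc (m + 1) θ h (Fin.cons y x) = pWord θ h y * pDoc m θ h x := by
  unfold pDoc
  rw [Fin.prod_univ_succ]
  simp only [Fin.cons_zero, Fin.cons_succ]

lemma sum_pWord {θ : Fin K → Fin V → ℝ} (hθ : θ ∈ Theta c0 V K)
    {h : Fin K → ℝ} (hh : h ∈ simplex K) : ∑ y : Fin V, pWord θ h y = 1 := by
  unfold pWord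
  rw [Finset.sum_comm]
  calc ∑ k, ∑ y, h k * θ k y = ∑ k, h k * ∑ y, θ k y := by
        simp [Finset.mul_sum]
    _ = ∑ k, h k := by simp [hθ.2]
    _ = 1 := hh.2

lemma sum_Fint_cons (hc0 : 0 < c0) {θ : Fin K → Fin V → ℝ} (hθ : θ ∈ Theta c0 V K)
    {δ : Fin K → Fin V → ℝ} (hδ0 : ∀ k, ∑ ℓ, δ k ℓ = 0) {h : Fin K → ℝ}
    (hh : h ∈ simplex K) (q m : ℕ) (x : Fin m → Fin V) :
    ∑ y : Fin V, Fint θ δ (q + 1) (m + 1) (Fin.cons y x) h = Fint θ δ (q + 1) m x h := by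
  set A := ∑ S ∈ Finset.powersetCard (q + 1) (Finset.univ : Finset (Fin m)),
    ∏ i ∈ S, ((∑ k, h k * δ k (x i)) / pWord θ h (x i)) with hA
  set B := ∑ S ∈ Finset.powersetCard q (Finset.univ : Finset (Fin m)),
    ∏ i ∈ S, ((∑ k, h k * δ k (x i)) / pWord θ h (x i)) with hB
  have hterm : ∀ y : Fin V, Fint θ δ (q + 1) (m + 1) (Fin.cons y x) h
      = (pDoc m θ h x * A) * pWord θ h y
        + (pDoc m θ h x * B) * (pWord θ h y * ((∑ k, h k * δ k y) / pWord θ h y)) := by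
    intro y
    unfold Fint
    rw [pDoc_cons, sum_powersetCard_univ_succ]
    simp only [Fin.cons_zero, Fin.cons_succ, ← hA, ← hB]
    ring
  have hsum0 : ∑ y : Fin V, pWord θ h y * ((∑ k, h k * δ k y) / pWord θ h y) = 0 := by
    have hne : ∀ y : Fin V, pWord θ h y ≠ 0 := fun y =>
      ne_of_gt (lt_of_lt_of_le hc0 (pWord_lb hc0 hθ hh y))
    calc ∑ y : Fin V, pWord θ h y * ((∑ k, h k * δ k y) / pWord θ h y)
        = ∑ y : Fin V, ∑ k, h k * δ k y := by
          refine Finset.sum_congr rfl fun y _ => ?_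
          rw [mul_div_cancel₀ _ (hne y)]
      _ = ∑ k, h k * ∑ y, δ k y := by
          rw [Finset.sum_comm]; simp [Finset.mul_sum]
      _ = 0 := by simp [hδ0]
  calc ∑ y : Fin V, Fint θ δ (q + 1) (m + 1) (Fin.cons y x) h
      = ∑ y : Fin V, ((pDoc m θ h x * A) * pWord θ h y
        + (pDoc m θ h x * B) * (pWord θ h y * ((∑ k, h k * δ k y) / pWord θ h y))) :=
      Finset.sum_congr rfl fun y _ => hterm y
    _ = (pDoc m θ h x * A) * (∑ y : Fin V, pWord θ h y)
        + (pDoc m θ h x * B) *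
          (∑ y : Fin V, pWord θ h y * ((∑ k, h k * δ k y) / pWord θ h y)) := by
      rw [Finset.sum_add_distrib, ← Finset.mul_sum, ← Finset.mul_sum]
    _ = pDoc m θ h x * A := by
      rw [sum_pWord hθ hh, hsum0, mul_one, mul_zero, add_zero]
    _ = Fint θ δ (q + 1) m x h := rfl

lemma integral_Fint_succ {ν0 : Measure (Fin K → ℝ)} (hν0 : NiceMixing K ν0)
    (hc0 : 0 < c0) {θ : Fin K → Fin V → ℝ} (hθ : θ ∈ Theta c0 V K)
    {δ : Fin K → Fin V → ℝ} (hδ : norm1 δ = 1) (hδ0 : ∀ k, ∑ ℓ, δ k ℓ = 0)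
    (q m : ℕ) (x : Fin m → Fin V) :
    ∫ h, Fint θ δ (q + 1) m x h ∂ν0
      = ∑ y : Fin V, ∫ h, Fint θ δ (q + 1) (m + 1) (Fin.cons y x) h ∂ν0 := by
  rw [← integral_finset_sum _ fun y _ => integrable_Fint hν0 hc0 hθ hδ (q + 1) (m + 1) _]
  exact integral_congr_ae ((ae_simplex hν0).mono fun h hh =>
    (sum_Fint_cons hc0 hθ hδ0 hh q m x).symm)

lemma D_step {ν0 : Measure (Fin K → ℝ)} (hν0 : NiceMixing K ν0)
    (hc0 : 0 < c0) {θ : Fin K → Fin V → ℝ} (hθ : θ ∈ Theta c0 V K)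
    {δ : Fin K → Fin V → ℝ} (hδ : norm1 δ = 1) (hδ0 : ∀ k, ∑ ℓ, δ k ℓ = 0)
    (q m : ℕ) :
    ∑ x : Fin m → Fin V, |∫ h, Fint θ δ (q + 1) m x h ∂ν0|
      ≤ ∑ x : Fin (m + 1) → Fin V, |∫ h, Fint θ δ (q + 1) (m + 1) x h ∂ν0| := by
  have hbij : Function.Bijective
      (fun p : Fin V × (Fin m → Fin V) => (Fin.cons p.1 p.2 : Fin (m + 1) → Fin V)) := by
    constructor
    · intro p q hpq
      obtain ⟨p1, p2⟩ := p; obtain ⟨q1, q2⟩ := q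
      obtain ⟨h1, h2⟩ := Fin.cons_injective2 hpq
      exact Prod.ext h1 h2
    · intro z
      exact ⟨⟨z 0, Fin.tail z⟩, Fin.cons_self_tail z⟩
  calc ∑ x : Fin m → Fin V, |∫ h, Fint θ δ (q + 1) m x h ∂ν0|
      = ∑ x : Fin m → Fin V,
          |∑ y : Fin V, ∫ h, Fint θ δ (q + 1) (m + 1) (Fin.cons y x) h ∂ν0| :=
      Finset.sum_congr rfl fun x _ => by
        rw [integral_Fint_succ hν0 hc0 hθ hδ hδ0 q m x]
    _ ≤ ∑ x : Fin m → Fin V,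
          ∑ y : Fin V, |∫ h, Fint θ δ (q + 1) (m + 1) (Fin.cons y x) h ∂ν0| :=
      Finset.sum_le_sum fun x _ => Finset.abs_sum_le_sum_abs _ _
    _ = ∑ y : Fin V, ∑ x : Fin m → Fin V,
          |∫ h, Fint θ δ (q + 1) (m + 1) (Fin.cons y x) h ∂ν0| := Finset.sum_comm
    _ = ∑ p : Fin V × (Fin m → Fin V),
          |∫ h, Fint θ δ (q + 1) (m + 1) (Fin.cons p.1 p.2) h ∂ν0| :=
      (Fintype.sum_prod_type (fun p : Fin V × (Fin m → Fin V) =>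
        |∫ h, Fint θ δ (q + 1) (m + 1) (Fin.cons p.1 p.2) h ∂ν0|)).symm
    _ = ∑ x : Fin (m + 1) → Fin V, |∫ h, Fint θ δ (q + 1) (m + 1) x h ∂ν0| :=
      Fintype.sum_bijective _ hbij _ _ fun p => rfl

lemma degen_step {ν0 : Measure (Fin K → ℝ)} (hν0 : NiceMixing K ν0)
    (hc0 : 0 < c0) {θ : Fin K → Fin V → ℝ} (hθ : θ ∈ Theta c0 V K) (q m : ℕ) :
    degen ν0 m θ (q + 1) ≤ degen ν0 (m + 1) θ (q + 1) := by
  rw [degen_eq, degen_eq]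
  by_cases hex : ∃ δ : Fin K → Fin V → ℝ, norm1 δ = 1 ∧ (∀ k, ∑ ℓ, δ k ℓ = 0)
  · obtain ⟨δ₀, hδ₀1, hδ₀2⟩ := hex
    apply le_csInf
    · exact ⟨_, δ₀, hδ₀1, hδ₀2, rfl⟩
    · rintro r ⟨δ, h1, h2, rfl⟩
      refine le_trans (csInf_le ?_ ⟨δ, h1, h2, rfl⟩) (D_step hν0 hc0 hθ h1 h2 q m)
      refine ⟨0, ?_⟩
      rintro s ⟨δ', _, _, rfl⟩
      exact Finset.sum_nonneg fun x _ => abs_nonneg _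
  · have h1e : {r : ℝ | ∃ δ : Fin K → Fin V → ℝ,
        norm1 δ = 1 ∧ (∀ k, ∑ ℓ, δ k ℓ = 0) ∧
        r = ∑ x : Fin m → Fin V, |∫ h, Fint θ δ (q + 1) m x h ∂ν0|} = ∅ := by
      ext r; simp only [Set.mem_setOf_eq, Set.mem_empty_iff_false, iff_false]
      rintro ⟨δ, ha, hb, -⟩; exact hex ⟨δ, ha, hb⟩
    have h2e : {r : ℝ | ∃ δ : Fin K → Fin V → ℝ,
        norm1 δ = 1 ∧ (∀ k, ∑ ℓ, δ k ℓ = 0) ∧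
        r = ∑ x : Fin (m + 1) → Fin V, |∫ h, Fint θ δ (q + 1) (m + 1) x h ∂ν0|} = ∅ := by
      ext r; simp only [Set.mem_setOf_eq, Set.mem_empty_iff_false, iff_false]
      rintro ⟨δ, ha, hb, -⟩; exact hex ⟨δ, ha, hb⟩
    rw [h1e, h2e]

lemma degen_mono {ν0 : Measure (Fin K → ℝ)} (hν0 : NiceMixing K ν0)
    (hc0 : 0 < c0) {θ : Fin K → Fin V → ℝ} (hθ : θ ∈ Theta c0 V K) (q : ℕ)
    {m m' : ℕ} (hmm' : m ≤ m') :
    degen ν0 m θ (q + 1) ≤ degen ν0 m' θ (q + 1) := by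
  induction m', hmm' using Nat.le_induction with
  | base => exact le_refl _
  | succ n hn ih => exact le_trans ih (degen_step hν0 hc0 hθ q n)

end Aux

/-- **Corollary 1 (monotonicity of the order of degeneracy).**
For every `θ ∈ Θ_{c₀}` and all `m' ≥ m ≥ 2`, `𝔭(m';θ) ≤ 𝔭(m;θ)` in `ℕ ∪ {∞}`. -/
theorem pOrder_monotone
    {V K : ℕ} (hV : 2 ≤ V) (hK : 2 ≤ K) {c0 : ℝ} (hc0 : 0 < c0)
    (ν0 : Measure (Fin K → ℝ)) (hν0 : NiceMixing K ν0)
    (θ : Fin K → Fin V → ℝ) (hθ : θ ∈ Theta c0 V K)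
    (m m' : ℕ) (hm : 2 ≤ m) (hmm' : m ≤ m') :
    pOrder ν0 m' θ ≤ pOrder ν0 m θ := by
  unfold pOrder
  apply sInf_le_sInf
  apply Set.image_mono
  rintro p ⟨h1, h2, h3⟩
  obtain ⟨q, rfl⟩ : ∃ q, p = q + 1 := ⟨p - 1, (Nat.succ_pred_eq_of_pos h1).symm⟩
  exact ⟨h1, h2.trans hmm', lt_of_lt_of_le h3 (degen_mono hν0 hc0 hθ q hmm')⟩

end TopicModel
end
end

section
/- (Proposition 4: Lipschitz continuity of the document distribution in the parameter.) For every m ≥ 1 and any two parameters θ′ = (θ′_1,…,θ′_K) and θ″ = (θ″_1,…,θ″_K) (each θ′_k, θ″_k a probability vector on [V]), ‖p_{θ′,m} − p_{θ″,m}‖_1 = Σ_{x∈[V]^m} |p_{θ′,m}(x) − p_{θ″,m}(x)| ≤ (2V)^m · ‖θ′ − θ″‖_2, where ‖θ′ − θ″‖_2 = sqrt( Σ_{k=1}^K Σ_{ℓ=1}^V (θ′_k(ℓ) − θ″_k(ℓ))² ). In particular, for fixed θ the map θ′ ↦ ‖p_{θ,m} − p_{θ′,m}‖_1 is continuous with respect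 to ‖·‖_2. -/
open MeasureTheory Filter

noncomputable section

namespace TopicModel

/-!
Each word probability `p_{θ,h}(v)` is a convex combination of the entries `θ_k(v)`, so for `h` in
the simplex it lies in `[0, 1]` and moves by at most `‖θ - θ'‖₂` when `θ` does. Telescoping a product
of factors of size at most one gives `|p_{θ,h}(x) - p_{θ',h}(x)| ≤ m ‖θ - θ'‖₂` uniformly in `h`;
integrating against `ν₀` and summing over the `V^m` documents, with `m ≤ 2^m`, yields the Lipschitz
bound. Continuity follows from it by the reverse triangle inequality for the `ℓ¹` distance.
-/

open Topology

lemma norm_prod_sub_prod_le {ι R : Type*} [NormedCommRing R] [NormOneClass R]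
    (s : Finset ι) (a b : ι → R) (ha : ∀ i ∈ s, ‖a i‖ ≤ 1) (hb : ∀ i ∈ s, ‖b i‖ ≤ 1) :
    ‖∏ i ∈ s, a i - ∏ i ∈ s, b i‖ ≤ ∑ i ∈ s, ‖a i - b i‖ := by
  induction s using Finset.cons_induction with
  | empty => simp
  | cons j s _ ih =>
    simp only [Finset.forall_mem_cons] at ha hb
    have hprod_b : ‖∏ i ∈ s, b i‖ ≤ 1 :=
      (Finset.norm_prod_le s b).trans (Finset.prod_le_one (fun i _ => norm_nonneg (b i)) hb.2)
    rw [Finset.prod_cons, Finset.prod_cons, Finset.sum_cons]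
    calc ‖a j * ∏ i ∈ s, a i - b j * ∏ i ∈ s, b i‖
        = ‖a j * (∏ i ∈ s, a i - ∏ i ∈ s, b i) + (a j - b j) * ∏ i ∈ s, b i‖ := by
          congr 1; ring
      _ ≤ ‖a j‖ * ‖∏ i ∈ s, a i - ∏ i ∈ s, b i‖ + ‖a j - b j‖ * ‖∏ i ∈ s, b i‖ :=
          (norm_add_le _ _).trans (add_le_add (norm_mul_le _ _) (norm_mul_le _ _))
      _ ≤ 1 * ∑ i ∈ s, ‖a i - b i‖ + ‖a j - b j‖ * 1 := by
          gcongr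
          exacts [ha.1, ih ha.2 hb.2]
      _ = ‖a j - b j‖ + ∑ i ∈ s, ‖a i - b i‖ := by ring

lemma abs_le_sqrt_sum_sum_sq {ι κ : Type*} [Fintype ι] [Fintype κ] (f : ι → κ → ℝ)
    (i : ι) (j : κ) : |f i j| ≤ √(∑ i, ∑ j, f i j ^ 2) := by
  refine Real.abs_le_sqrt ?_
  calc f i j ^ 2 ≤ ∑ j, f i j ^ 2 :=
        Finset.single_le_sum (fun j _ => sq_nonneg (f i j)) (Finset.mem_univ j)
    _ ≤ ∑ i, ∑ j, f i j ^ 2 :=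
        Finset.single_le_sum (f := fun i => ∑ j, f i j ^ 2)
          (fun i _ => Finset.sum_nonneg fun j _ => sq_nonneg (f i j)) (Finset.mem_univ i)

def l2Dist {V K : ℕ} (θ θ' : Fin K → Fin V → ℝ) : ℝ :=
  √(∑ k, ∑ ℓ, (θ k ℓ - θ' k ℓ) ^ 2)

section

variable {V K m : ℕ} {θ θ' : Fin K → Fin V → ℝ} {h : Fin K → ℝ}

lemma l2Dist_nonneg (θ θ' : Fin K → Fin V → ℝ) : 0 ≤ l2Dist θ θ' :=
  Real.sqrt_nonneg _

lemma l2Dist_self (θ : Fin K → Fin V → ℝ) : l2Dist θ θ = 0 := by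
  simp [l2Dist]

lemma continuous_l2Dist (θ : Fin K → Fin V → ℝ) : Continuous (l2Dist θ) := by
  unfold l2Dist
  fun_prop

lemma abs_sub_le_l2Dist (θ θ' : Fin K → Fin V → ℝ) (k : Fin K) (ℓ : Fin V) :
    |θ k ℓ - θ' k ℓ| ≤ l2Dist θ θ' :=
  abs_le_sqrt_sum_sum_sq (fun k ℓ => θ k ℓ - θ' k ℓ) k ℓ

lemma IsParam.le_one (hθ : IsParam θ) (k : Fin K) (ℓ : Fin V) : θ k ℓ ≤ 1 :=
  (Finset.single_le_sum (fun ℓ _ => hθ.1 k ℓ) (Finset.mem_univ ℓ)).trans_eq (hθ.2 k)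

lemma abs_pWord_le_one (hθ : IsParam θ) (hh : h ∈ simplex K) (v : Fin V) :
    |pWord θ h v| ≤ 1 := by
  rw [pWord, abs_of_nonneg (Finset.sum_nonneg fun k _ => mul_nonneg (hh.1 k) (hθ.1 k v))]
  calc ∑ k, h k * θ k v ≤ ∑ k, h k * 1 :=
        Finset.sum_le_sum fun k _ => mul_le_mul_of_nonneg_left (hθ.le_one k v) (hh.1 k)
    _ = 1 := by simp [hh.2]

lemma abs_pWord_sub_le (hh : h ∈ simplex K) (v : Fin V) :
    |pWord θ h v - pWord θ' h v| ≤ l2Dist θ θ' := by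
  have hsub : pWord θ h v - pWord θ' h v = ∑ k, h k * (θ k v - θ' k v) := by
    simp only [pWord, ← Finset.sum_sub_distrib, mul_sub]
  rw [hsub]
  calc |∑ k, h k * (θ k v - θ' k v)| ≤ ∑ k, h k * |θ k v - θ' k v| := by
        refine (Finset.abs_sum_le_sum_abs _ _).trans_eq ?_
        simp only [abs_mul, abs_of_nonneg (hh.1 _)]
    _ ≤ ∑ k, h k * l2Dist θ θ' :=
        Finset.sum_le_sum fun k _ =>
          mul_le_mul_of_nonneg_left (abs_sub_le_l2Dist θ θ' k v) (hh.1 k)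
    _ = l2Dist θ θ' := by rw [← Finset.sum_mul, hh.2, one_mul]

lemma continuous_pDoc (θ : Fin K → Fin V → ℝ) (x : Fin m → Fin V) :
    Continuous fun h => pDoc m θ h x := by
  unfold pDoc pWord
  fun_prop

lemma abs_pDoc_le_one (hθ : IsParam θ) (hh : h ∈ simplex K) (x : Fin m → Fin V) :
    |pDoc m θ h x| ≤ 1 := by
  rw [pDoc, Finset.abs_prod]
  exact Finset.prod_le_one (fun _ _ => abs_nonneg _) fun i _ => abs_pWord_le_one hθ hh (x i)

lemma abs_pDoc_sub_le (hθ : IsParam θ) (hθ' : IsParam θ') (hh : h ∈ simplex K)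
    (x : Fin m → Fin V) : |pDoc m θ h x - pDoc m θ' h x| ≤ m * l2Dist θ θ' := by
  calc |pDoc m θ h x - pDoc m θ' h x| ≤ ∑ i, |pWord θ h (x i) - pWord θ' h (x i)| := by
        simpa only [pDoc, Real.norm_eq_abs] using norm_prod_sub_prod_le Finset.univ
          (fun i => pWord θ h (x i)) (fun i => pWord θ' h (x i))
          (fun i _ => abs_pWord_le_one hθ hh (x i)) (fun i _ => abs_pWord_le_one hθ' hh (x i))
    _ ≤ ∑ _i : Fin m, l2Dist θ θ' := Finset.sum_le_sum fun i _ => abs_pWord_sub_le hh (x i)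
    _ = m * l2Dist θ θ' := by simp

variable {ν0 : Measure (Fin K → ℝ)}

lemma integrable_pDoc [IsFiniteMeasure ν0] (hsupp : ν0 (simplex K)ᶜ = 0) (hθ : IsParam θ)
    (x : Fin m → Fin V) : Integrable (fun h => pDoc m θ h x) ν0 := by
  refine Integrable.mono' (integrable_const 1) (continuous_pDoc θ x).aestronglyMeasurable ?_
  filter_upwards [mem_ae_iff.mpr hsupp] with h hh
  exact abs_pDoc_le_one hθ hh x

lemma abs_pM_sub_le [IsProbabilityMeasure ν0] (hsupp : ν0 (simplex K)ᶜ = 0)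
    (hθ : IsParam θ) (hθ' : IsParam θ') (x : Fin m → Fin V) :
    |pM ν0 m θ x - pM ν0 m θ' x| ≤ m * l2Dist θ θ' := by
  rw [pM, pM, ← integral_sub (integrable_pDoc hsupp hθ x) (integrable_pDoc hsupp hθ' x)]
  simpa using norm_integral_le_of_norm_le_const (μ := ν0)
    (f := fun h => pDoc m θ h x - pDoc m θ' h x) (C := m * l2Dist θ θ') <| by
    filter_upwards [mem_ae_iff.mpr hsupp] with h hh
    exact (Real.norm_eq_abs _).trans_le <| abs_pDoc_sub_le hθ hθ' hh x

lemma distL1_le [IsProbabilityMeasure ν0] (hsupp : ν0 (simplex K)ᶜ = 0)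
    (hθ : IsParam θ) (hθ' : IsParam θ') :
    distL1 ν0 m θ θ' ≤ (2 * (V : ℝ)) ^ m * l2Dist θ θ' := by
  have hm : (m : ℝ) ≤ 2 ^ m := by exact_mod_cast Nat.lt_two_pow_self.le
  calc distL1 ν0 m θ θ' ≤ ∑ _x : Fin m → Fin V, m * l2Dist θ θ' :=
        Finset.sum_le_sum fun x _ => abs_pM_sub_le hsupp hθ hθ' x
    _ = (V : ℝ) ^ m * m * l2Dist θ θ' := by simp [mul_assoc]
    _ ≤ (V : ℝ) ^ m * 2 ^ m * l2Dist θ θ' := by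
        gcongr
        exact l2Dist_nonneg θ θ'
    _ = (2 * (V : ℝ)) ^ m * l2Dist θ θ' := by ring

lemma abs_distL1_sub_distL1_le (ν0 : Measure (Fin K → ℝ)) (m : ℕ)
    (θ θ' θ'' : Fin K → Fin V → ℝ) :
    |distL1 ν0 m θ θ' - distL1 ν0 m θ θ''| ≤ distL1 ν0 m θ' θ'' := by
  rw [distL1, distL1, ← Finset.sum_sub_distrib]
  refine (Finset.abs_sum_le_sum_abs _ _).trans (Finset.sum_le_sum fun x _ => ?_)
  exact (abs_abs_sub_abs_le_abs_sub _ _).trans_eq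
    (by rw [sub_sub_sub_cancel_left, abs_sub_comm])

end

theorem distL1_lipschitz_general
    {V K : ℕ} (m : ℕ)
    (ν0 : Measure (Fin K → ℝ)) (hprob : IsProbabilityMeasure ν0)
    (hsupp : ν0 (simplex K)ᶜ = 0) :
    (∀ θ' θ'' : Fin K → Fin V → ℝ, IsParam θ' → IsParam θ'' →
      distL1 ν0 m θ' θ'' ≤
        (2 * (V : ℝ)) ^ m * Real.sqrt (∑ k, ∑ ℓ, (θ' k ℓ - θ'' k ℓ) ^ 2)) ∧
    (∀ θ : Fin K → Fin V → ℝ, IsParam θ →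
      ContinuousOn (fun θ' : Fin K → Fin V → ℝ => distL1 ν0 m θ θ')
        {θ' | IsParam θ'}) := by
  refine ⟨fun θ' θ'' hθ' hθ'' => distL1_le hsupp hθ' hθ'', fun θ _ θ₀ hθ₀ => ?_⟩
  have hbound : Tendsto (fun θ' => (2 * (V : ℝ)) ^ m * l2Dist θ₀ θ')
      (𝓝[{θ' | IsParam θ'}] θ₀) (𝓝 0) := by
    have hcont : Continuous fun θ' => (2 * (V : ℝ)) ^ m * l2Dist θ₀ θ' :=
      continuous_const.mul (continuous_l2Dist θ₀)
    simpa [l2Dist_self] using (hcont.tendsto θ₀).mono_left nhdsWithin_le_nhds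
  rw [ContinuousWithinAt, tendsto_iff_dist_tendsto_zero]
  refine squeeze_zero' (Eventually.of_forall fun _ => dist_nonneg) ?_ hbound
  filter_upwards [self_mem_nhdsWithin] with θ' hθ'
  rw [Real.dist_eq, abs_sub_comm]
  exact (abs_distL1_sub_distL1_le ν0 m θ θ₀ θ').trans (distL1_le hsupp hθ₀ hθ')

/-- **Proposition 4 (Lipschitz continuity of the document distribution in the parameter).**
For any two parameters `θ'`, `θ''` (tuples of probability vectors),
`‖p_{θ',m} − p_{θ'',m}‖₁ ≤ (2V)^m · ‖θ' − θ''‖₂`; in particular, for fixed `θ` the map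
`θ' ↦ ‖p_{θ,m} − p_{θ',m}‖₁` is continuous on the set of parameters. -/
theorem distL1_lipschitz
    {V K : ℕ} (hV : 2 ≤ V) (hK : 2 ≤ K) (m : ℕ) (hm : 1 ≤ m)
    (ν0 : Measure (Fin K → ℝ)) (hprob : IsProbabilityMeasure ν0)
    (hsupp : ν0 (simplex K)ᶜ = 0) :
    (∀ θ' θ'' : Fin K → Fin V → ℝ, IsParam θ' → IsParam θ'' →
      distL1 ν0 m θ' θ'' ≤
        (2 * (V : ℝ)) ^ m * Real.sqrt (∑ k, ∑ ℓ, (θ' k ℓ - θ'' k ℓ) ^ 2)) ∧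
    (∀ θ : Fin K → Fin V → ℝ, IsParam θ →
      ContinuousOn (fun θ' : Fin K → Fin V → ℝ => distL1 ν0 m θ θ')
        {θ' | IsParam θ'}) :=
  distL1_lipschitz_general m ν0 hprob hsupp

end TopicModel
end
end

section
/- (Corollary 3: uniform separation away from the equivalence class.) Let K ≥ 2, m ≥ 2, θ ∈ Θ_{c_0} and 0 < ε < 1/2. Then there exists η > 0 such that every θ′ ∈ Θ_{c_0} satisfying d_W(θ′, θ̃) ≥ ε for all θ̃ ∈ Θ̃_{c_0}(θ) obeys ‖p_{θ,m} − p_{θ′,m}‖_1 ≥ η. -/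
open MeasureTheory Filter

noncomputable section

/-!
The set of parameters at Wasserstein distance at least `ε` from the equivalence class of `θ` is
a closed subset of the compact set `Θ_{c₀}`, hence compact. On it the continuous function
`θ' ↦ ‖p_{θ,m} − p_{θ',m}‖₁` is positive: a zero would put `θ'` into the equivalence class,
at distance `0 < ε` from itself. A positive continuous function on a compact set is bounded
below by a positive constant.
-/

namespace TopicModel

lemma le_one_of_mem_simplex {K : ℕ} {h : Fin K → ℝ} (hh : h ∈ simplex K) (k : Fin K) :
    h k ≤ 1 :=
  hh.2 ▸ Finset.single_le_sum (fun j _ => hh.1 j) (Finset.mem_univ k)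

lemma integrable_prod_apply {K m : ℕ} {ν0 : Measure (Fin K → ℝ)} [IsFiniteMeasure ν0]
    (hsupp : ∀ᵐ h ∂ν0, h ∈ simplex K) (c : Fin m → Fin K) :
    Integrable (fun h : Fin K → ℝ => ∏ i, h (c i)) ν0 := by
  refine Integrable.of_bound (by fun_prop : Continuous _).aestronglyMeasurable 1 ?_
  filter_upwards [hsupp] with h hh
  rw [Real.norm_of_nonneg (Finset.prod_nonneg fun i _ => hh.1 _)]
  exact Finset.prod_le_one (fun i _ => hh.1 _) fun i _ => le_one_of_mem_simplex hh _

lemma pM_eq_sum_moment_mul {V K m : ℕ} {ν0 : Measure (Fin K → ℝ)} [IsFiniteMeasure ν0]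
    (hsupp : ∀ᵐ h ∂ν0, h ∈ simplex K) (θ : Fin K → Fin V → ℝ) (x : Fin m → Fin V) :
    pM ν0 m θ x = ∑ c : Fin m → Fin K, (∫ h, ∏ i, h (c i) ∂ν0) * ∏ i, θ (c i) (x i) := by
  have hexpand : ∀ h : Fin K → ℝ,
      pDoc m θ h x = ∑ c : Fin m → Fin K, (∏ i, h (c i)) * ∏ i, θ (c i) (x i) := by
    intro h
    simp [pDoc, pWord, Finset.prod_univ_sum, Finset.prod_mul_distrib]
  simp_rw [pM, hexpand]
  rw [integral_finsetSum _ fun c _ => (integrable_prod_apply hsupp c).mul_const _]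
  simp_rw [integral_mul_const]

lemma continuous_pM {V K m : ℕ} {ν0 : Measure (Fin K → ℝ)} [IsFiniteMeasure ν0]
    (hsupp : ∀ᵐ h ∂ν0, h ∈ simplex K) (x : Fin m → Fin V) :
    Continuous fun θ : Fin K → Fin V → ℝ => pM ν0 m θ x := by
  simp_rw [pM_eq_sum_moment_mul hsupp]
  fun_prop

lemma continuous_distL1 {V K m : ℕ} {ν0 : Measure (Fin K → ℝ)} [IsFiniteMeasure ν0]
    (hsupp : ∀ᵐ h ∂ν0, h ∈ simplex K) (θ : Fin K → Fin V → ℝ) :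
    Continuous fun θ' : Fin K → Fin V → ℝ => distL1 ν0 m θ θ' :=
  continuous_finsetSum _ fun x _ => (continuous_const.sub (continuous_pM hsupp x)).abs

lemma pM_eq_of_distL1_eq_zero {V K m : ℕ} {ν0 : Measure (Fin K → ℝ)}
    {θ θ' : Fin K → Fin V → ℝ} (h : distL1 ν0 m θ θ' = 0) (x : Fin m → Fin V) :
    pM ν0 m θ' x = pM ν0 m θ x := by
  have := (Finset.sum_eq_zero_iff_of_nonneg fun x _ => abs_nonneg _).1 h x (Finset.mem_univ x)
  linarith [abs_eq_zero.1 this]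

lemma bddBelow_range_dW {V K : ℕ} (θ θ' : Fin K → Fin V → ℝ) :
    BddBelow (Set.range fun π : Equiv.Perm (Fin K) => ∑ k, ∑ ℓ, |θ k ℓ - θ' (π k) ℓ|) :=
  ⟨0, Set.forall_mem_range.2 fun _ => by positivity⟩

lemma dW_self {V K : ℕ} (θ : Fin K → Fin V → ℝ) : dW θ θ = 0 :=
  le_antisymm (by simpa [dW] using ciInf_le (bddBelow_range_dW θ θ) 1)
    (le_ciInf fun _ => by positivity)

lemma le_dW_iff {V K : ℕ} {θ θ' : Fin K → Fin V → ℝ} {a : ℝ} :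
    a ≤ dW θ θ' ↔ ∀ π : Equiv.Perm (Fin K), a ≤ ∑ k, ∑ ℓ, |θ k ℓ - θ' (π k) ℓ| :=
  le_ciInf_iff (bddBelow_range_dW θ θ')

lemma isClosed_setOf_le_dW {V K : ℕ} (a : ℝ) (θtil : Fin K → Fin V → ℝ) :
    IsClosed {θ' : Fin K → Fin V → ℝ | a ≤ dW θ' θtil} := by
  simp_rw [le_dW_iff, Set.ofPred_forall]
  exact isClosed_iInter fun π => isClosed_le continuous_const (by fun_prop)

lemma isClosed_Theta (c0 : ℝ) (V K : ℕ) : IsClosed (Theta c0 V K) := by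
  simp_rw [Theta, Set.ofPred_and, Set.ofPred_forall]
  exact (isClosed_iInter fun k => isClosed_iInter fun ℓ =>
    isClosed_le continuous_const (by fun_prop)).inter
    (isClosed_iInter fun k => isClosed_eq (by fun_prop) continuous_const)

/-- Each entry is `1` minus the other `V - 1` entries of its row, each at least `c₀`. -/
lemma le_of_mem_Theta {V K : ℕ} {c0 : ℝ} {θ : Fin K → Fin V → ℝ} (hθ : θ ∈ Theta c0 V K)
    (k : Fin K) (ℓ : Fin V) : θ k ℓ ≤ 1 - ((V : ℝ) - 1) * c0 := by
  have hrow := Finset.add_sum_erase Finset.univ (θ k) (Finset.mem_univ ℓ)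
  have hrest := Finset.card_nsmul_le_sum (Finset.univ.erase ℓ) (θ k) c0
    fun j _ => hθ.1 k j
  have hcard : ((Finset.univ.erase ℓ).card : ℝ) = V - 1 := by
    rw [Finset.card_erase_of_mem (Finset.mem_univ ℓ), Finset.card_univ, Fintype.card_fin,
      Nat.cast_sub (Nat.one_le_of_lt ℓ.isLt), Nat.cast_one]
  rw [nsmul_eq_mul, hcard] at hrest
  linarith [hθ.2 k]

lemma isCompact_Theta (c0 : ℝ) (V K : ℕ) : IsCompact (Theta c0 V K) :=
  (isCompact_Icc (a := fun _ _ => c0) (b := fun _ _ => 1 - ((V : ℝ) - 1) * c0)).of_isClosed_subset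
    (isClosed_Theta c0 V K) fun _ hθ => ⟨hθ.1, le_of_mem_Theta hθ⟩

theorem uniform_separation_general
    {V K m : ℕ} {c0 : ℝ}
    (ν0 : Measure (Fin K → ℝ)) (hν0 : NiceMixing K ν0)
    (θ : Fin K → Fin V → ℝ)
    (ε : ℝ) (hε : 0 < ε) :
    ∃ η > (0 : ℝ), ∀ θ' ∈ Theta c0 V K,
      (∀ θtil ∈ equivClass ν0 m c0 θ, ε ≤ dW θ' θtil) →
      η ≤ distL1 ν0 m θ θ' := by
  have := hν0.prob
  set far := Theta c0 V K ∩ ⋂ θtil ∈ equivClass ν0 m c0 θ, {θ' | ε ≤ dW θ' θtil}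
  have hfar_compact : IsCompact far :=
    (isCompact_Theta c0 V K).inter_right
      (isClosed_biInter fun θtil _ => isClosed_setOf_le_dW ε θtil)
  have hpos : ∀ θ' ∈ far, 0 < distL1 ν0 m θ θ' := by
    rintro θ' ⟨hθ', hθ'far⟩
    refine (Finset.sum_nonneg fun x _ => abs_nonneg _).lt_of_ne' fun hzero => ?_
    have hself := Set.mem_iInter₂.1 hθ'far θ' ⟨hθ', pM_eq_of_distL1_eq_zero hzero⟩
    linarith [hself.out, dW_self θ']
  obtain ⟨η, hη, hηle⟩ := hfar_compact.exists_forall_le'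
    (continuous_distL1 (ae_iff.2 hν0.support) θ).continuousOn hpos
  exact ⟨η, hη, fun θ' hθ' hθ'far => hηle θ' ⟨hθ', Set.mem_iInter₂.2 hθ'far⟩⟩

/-- **Corollary 3 (uniform separation away from the equivalence class).**
For `0 < ε < 1/2` there exists `η > 0` such that every `θ' ∈ Θ_{c₀}` that is at
Wasserstein distance at least `ε` from every member of `Θ̃_{c₀}(θ)` satisfies
`‖p_{θ,m} − p_{θ',m}‖₁ ≥ η`. -/
theorem uniform_separation
    {V K m : ℕ} (hV : 2 ≤ V) (hK : 2 ≤ K) (hm : 2 ≤ m) {c0 : ℝ} (hc0 : 0 < c0)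
    (ν0 : Measure (Fin K → ℝ)) (hν0 : NiceMixing K ν0)
    (θ : Fin K → Fin V → ℝ) (hθ : θ ∈ Theta c0 V K)
    (ε : ℝ) (hε : 0 < ε) (hε2 : ε < 1 / 2) :
    ∃ η > (0 : ℝ), ∀ θ' ∈ Theta c0 V K,
      (∀ θtil ∈ equivClass ν0 m c0 θ, ε ≤ dW θ' θtil) →
      η ≤ distL1 ν0 m θ θ' :=
  uniform_separation_general ν0 hν0 θ ε hε

end TopicModel
end
end
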